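/- arXiv:2206.06794 — 3 statements merged into one kernel-verified Lean document; each statement's English description precedes it below -/
import Mathlib

section
/- For every H ∈ (1/2,1) and every n ≥ 1, the operator K̇_H is a bounded linear operator on L²([0,1];ℝⁿ): there exists a constant C > 0 such that for every f ∈ L²([0,1];ℝⁿ), the function t ↦ c_H t^{H−1/2} ∫_0^t (t−s)^{H−3/2} s^{1/2−H} f(s) ds belongs to L²([0,1];ℝⁿ) and has L² norm at most C times the L² norm of f. -/
open MeasureTheory Set

noncomputable section

/-- The constant `c_H = (H(2H-1)/B(2-2H, H-1/2))^{1/2}`, where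
`B(x,y) = Γ(x)Γ(y)/Γ(x+y)` is the Beta function. -/
def cH (H : ℝ) : ℝ :=
  Real.sqrt (H * (2 * H - 1) /
    (Real.Gamma (2 - 2 * H) * Real.Gamma (H - 1 / 2) / Real.Gamma ((2 - 2 * H) + (H - 1 / 2))))

/-- The operator `K̇_H`:
`(K̇_H f)(t) = c_H t^{H-1/2} ∫_0^t (t-s)^{H-3/2} s^{1/2-H} f(s) ds`. -/
def Kdot (H : ℝ) {E : Type*} [NormedAddCommGroup E] [NormedSpace ℝ E]
    (f : ℝ → E) (t : ℝ) : E :=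
  (cH H * t ^ (H - 1 / 2)) •
    ∫ s in Ioo (0 : ℝ) t, ((t - s) ^ (H - 3 / 2) * s ^ (1 / 2 - H)) • f s

/-!
Write `α = H - 1/2 ∈ (0, 1/2)`. For `0 < t ≤ 1`, Cauchy–Schwarz with respect to the weight
`(t - s)^(α-1) ds` on `(0, t)` gives
`|K̇f(t)|² ≤ c_H² t^(2α) (∫₀ᵗ (t-s)^(α-1) s^(-2α) ds) (∫₀ᵗ (t-s)^(α-1) |f(s)|² ds)`.
The first factor is a Beta integral of order `t^(-α)` (split at `t/2`), so the prefactor stays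
bounded on `(0, 1]`. Integrating over `t` and exchanging the order of integration leaves
`∫ₛ¹ (t-s)^(α-1) dt ≤ 1/α` in front of `|f(s)|²`.
-/

open scoped ENNReal

theorem lintegral_Ioc_rpow_sub_right {a x y : ℝ} (ha : 0 < a) (hxy : x ≤ y) :
    ∫⁻ t in Ioc x y, ENNReal.ofReal ((t - x) ^ (a - 1)) =
      ENNReal.ofReal ((y - x) ^ a / a) := by
  have hint : IntervalIntegrable (fun t => (t - x) ^ (a - 1)) volume x y := by
    simpa using (intervalIntegral.intervalIntegrable_rpow' (a := 0) (b := y - x)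
      (by linarith : -1 < a - 1)).comp_sub_right x
  rw [← ofReal_integral_eq_lintegral_ofReal
      ((intervalIntegrable_iff_integrableOn_Ioc_of_le hxy).mp hint)
      ((ae_restrict_iff' measurableSet_Ioc).mpr
        (ae_of_all _ fun t ht => Real.rpow_nonneg (sub_nonneg.mpr ht.1.le) _)),
    ← intervalIntegral.integral_of_le hxy,
    intervalIntegral.integral_comp_sub_right (fun u => u ^ (a - 1)), sub_self,
    integral_rpow (Or.inl (by linarith)), sub_add_cancel, Real.zero_rpow ha.ne', sub_zero]

theorem lintegral_Ioc_rpow_sub_left {a x y : ℝ} (ha : 0 < a) (hxy : x ≤ y) :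
    ∫⁻ t in Ioc x y, ENNReal.ofReal ((y - t) ^ (a - 1)) =
      ENNReal.ofReal ((y - x) ^ a / a) := by
  have hint : IntervalIntegrable (fun t => (y - t) ^ (a - 1)) volume x y := by
    simpa using ((intervalIntegral.intervalIntegrable_rpow' (a := 0) (b := y - x)
      (by linarith : -1 < a - 1)).comp_sub_left y).symm
  rw [← ofReal_integral_eq_lintegral_ofReal
      ((intervalIntegrable_iff_integrableOn_Ioc_of_le hxy).mp hint)
      ((ae_restrict_iff' measurableSet_Ioc).mpr
        (ae_of_all _ fun t ht => Real.rpow_nonneg (sub_nonneg.mpr ht.2) _)),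
    ← intervalIntegral.integral_of_le hxy,
    intervalIntegral.integral_comp_sub_left (fun u => u ^ (a - 1)), sub_self,
    integral_rpow (Or.inl (by linarith)), sub_add_cancel, Real.zero_rpow ha.ne', sub_zero]

theorem lintegral_Ioo_rpow_sub_mul_rpow_le {a b t : ℝ} (ha : 0 < a) (ha1 : a ≤ 1)
    (hb : 0 < b) (hb1 : b ≤ 1) (ht : 0 < t) :
    ∫⁻ s in Ioo 0 t, ENNReal.ofReal ((t - s) ^ (a - 1) * s ^ (b - 1)) ≤
      ENNReal.ofReal ((t / 2) ^ (a + b - 1) * (1 / a + 1 / b)) := by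
  set m := t / 2
  have hm : 0 < m := half_pos ht
  have htm : t = m + m := (add_halves t).symm
  have near : ∫⁻ s in Ioc 0 m, ENNReal.ofReal ((t - s) ^ (a - 1) * s ^ (b - 1)) ≤
      ENNReal.ofReal (m ^ (a - 1)) * ENNReal.ofReal (m ^ b / b) := calc
    _ ≤ ∫⁻ s in Ioc 0 m,
          ENNReal.ofReal (m ^ (a - 1)) * ENNReal.ofReal ((s - 0) ^ (b - 1)) := by
      refine setLIntegral_mono' measurableSet_Ioc fun s hs => ?_
      rw [sub_zero, ← ENNReal.ofReal_mul (by positivity)]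
      exact ENNReal.ofReal_le_ofReal <| mul_le_mul_of_nonneg_right
        (Real.rpow_le_rpow_of_nonpos hm (by linarith [hs.2]) (by linarith : a - 1 ≤ 0))
        (Real.rpow_nonneg hs.1.le _)
    _ = _ := by
      rw [lintegral_const_mul' _ _ ENNReal.ofReal_ne_top,
        lintegral_Ioc_rpow_sub_right hb hm.le, sub_zero]
  have far : ∫⁻ s in Ioo m t, ENNReal.ofReal ((t - s) ^ (a - 1) * s ^ (b - 1)) ≤
      ENNReal.ofReal (m ^ a / a) * ENNReal.ofReal (m ^ (b - 1)) := calc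
    _ ≤ ∫⁻ s in Ioc m t,
          ENNReal.ofReal ((t - s) ^ (a - 1)) * ENNReal.ofReal (m ^ (b - 1)) := by
      refine (lintegral_mono_set Ioo_subset_Ioc_self).trans ?_
      refine setLIntegral_mono' measurableSet_Ioc fun s hs => ?_
      rw [← ENNReal.ofReal_mul (Real.rpow_nonneg (sub_nonneg.mpr hs.2) _)]
      exact ENNReal.ofReal_le_ofReal <| mul_le_mul_of_nonneg_left
        (Real.rpow_le_rpow_of_nonpos hm hs.1.le (by linarith : b - 1 ≤ 0))
        (Real.rpow_nonneg (sub_nonneg.mpr hs.2) _)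
    _ = _ := by
      rw [lintegral_mul_const' _ _ ENNReal.ofReal_ne_top,
        lintegral_Ioc_rpow_sub_left ha (by linarith), show t - m = m by ring]
  rw [← Ioc_union_Ioo_eq_Ioo hm.le (half_lt_self ht),
    lintegral_union measurableSet_Ioo
      ((Ioc_disjoint_Ioc_of_le le_rfl).mono_right Ioo_subset_Ioc_self)]
  refine (add_le_add near far).trans_eq ?_
  have hfrac (c : ℝ) (hc : 0 < c) : 0 ≤ m ^ c / c := div_nonneg (Real.rpow_nonneg hm.le _) hc.le
  rw [← ENNReal.ofReal_mul (Real.rpow_nonneg hm.le _), ← ENNReal.ofReal_mul (hfrac _ ha),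
    ← ENNReal.ofReal_add (mul_nonneg (Real.rpow_nonneg hm.le _) (hfrac _ hb))
      (mul_nonneg (hfrac _ ha) (Real.rpow_nonneg hm.le _))]
  congr 1
  simp only [Real.rpow_sub hm, Real.rpow_add hm, Real.rpow_one]
  field_simp
  ring

theorem sq_lintegral_mul_mul_le {α : Type*} [MeasurableSpace α] {μ : Measure α}
    {k u v : α → ℝ≥0∞} (hk : AEMeasurable k μ) (hu : AEMeasurable u μ) (hv : AEMeasurable v μ) :
    (∫⁻ x, k x * u x * v x ∂μ) ^ 2 ≤ (∫⁻ x, k x * u x ^ 2 ∂μ) * ∫⁻ x, k x * v x ^ 2 ∂μ := by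
  have hsqrt (x : ℝ≥0∞) : (x ^ 2) ^ (2⁻¹ : ℝ) = x := by
    simpa using ENNReal.pow_rpow_inv_natCast two_ne_zero x
  have hsq (x : ℝ≥0∞) : (x ^ (2⁻¹ : ℝ)) ^ 2 = x := by
    simpa using ENNReal.rpow_inv_natCast_pow two_ne_zero x
  have hsplit (x : α) : k x * u x * v x =
      (k x * u x ^ 2) ^ (2⁻¹ : ℝ) * (k x * v x ^ 2) ^ (2⁻¹ : ℝ) := by
    rw [← ENNReal.mul_rpow_of_nonneg _ _ (by norm_num), ← hsqrt (k x * u x * v x)]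
    ring_nf
  simp_rw [hsplit]
  calc _ ≤ ((∫⁻ x, k x * u x ^ 2 ∂μ) ^ (2⁻¹ : ℝ) * (∫⁻ x, k x * v x ^ 2 ∂μ) ^ (2⁻¹ : ℝ)) ^ 2 :=
        pow_le_pow_left₀ zero_le (ENNReal.lintegral_mul_norm_pow_le (hk.mul (hu.pow_const 2))
          (hk.mul (hv.pow_const 2)) (by norm_num) (by norm_num) (by norm_num)) 2
    _ = _ := by rw [mul_pow, hsq, hsq]

theorem lintegral_Ioc_lintegral_Ioo_swap {x y : ℝ} {f : ℝ × ℝ → ℝ≥0∞} (hf : Measurable f) :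
    ∫⁻ t in Ioc x y, ∫⁻ s in Ioo x t, f (t, s) = ∫⁻ s in Ioo x y, ∫⁻ t in Ioc s y, f (t, s) := by
  set T : Set (ℝ × ℝ) := {p | x < p.2 ∧ p.2 < p.1 ∧ p.1 ≤ y}
  have hT : MeasurableSet T :=
    (measurableSet_lt measurable_const measurable_snd).inter
      ((measurableSet_lt measurable_snd measurable_fst).inter
        (measurableSet_le measurable_fst measurable_const))
  have hL (t : ℝ) : (Ioc x y).indicator (fun t => ∫⁻ s in Ioo x t, f (t, s)) t =
      ∫⁻ s, T.indicator f (t, s) := by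
    by_cases ht : t ∈ Ioc x y
    · rw [indicator_of_mem ht, ← lintegral_indicator measurableSet_Ioo]
      congr with s
      simp [indicator_apply, T, ht.2]
    · have hout (s : ℝ) : (t, s) ∉ T := fun h => ht ⟨h.1.trans h.2.1, h.2.2⟩
      simp [ht, hout]
  have hR (s : ℝ) : (Ioo x y).indicator (fun s => ∫⁻ t in Ioc s y, f (t, s)) s =
      ∫⁻ t, T.indicator f (t, s) := by
    by_cases hs : s ∈ Ioo x y
    · rw [indicator_of_mem hs, ← lintegral_indicator measurableSet_Ioc]
      congr with t
      simp [indicator_apply, T, hs.1]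
    · have hout (t : ℝ) : (t, s) ∉ T := fun h => hs ⟨h.1, h.2.1.trans_le h.2.2⟩
      simp [hs, hout]
  rw [← lintegral_indicator measurableSet_Ioc, ← lintegral_indicator measurableSet_Ioo]
  simp_rw [hL, hR]
  exact lintegral_lintegral_swap (hf.indicator hT).aemeasurable

theorem eLpNorm_two_le_of_lintegral_sq_le {α F G : Type*} [MeasurableSpace α] {μ : Measure α}
    [NormedAddCommGroup F] [NormedAddCommGroup G] {f : α → F} {g : α → G} {M : ℝ≥0∞}
    (h : ∫⁻ x, ‖g x‖ₑ ^ 2 ∂μ ≤ M ^ 2 * ∫⁻ x, ‖f x‖ₑ ^ 2 ∂μ) :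
    eLpNorm g 2 μ ≤ M * eLpNorm f 2 μ := by
  have hf : eLpNorm f 2 μ ^ 2 = ∫⁻ x, ‖f x‖ₑ ^ 2 ∂μ := by
    simpa using eLpNorm_nnreal_pow_eq_lintegral (f := f) (μ := μ) (p := 2) two_ne_zero
  have hg : eLpNorm g 2 μ ^ 2 = ∫⁻ x, ‖g x‖ₑ ^ 2 ∂μ := by
    simpa using eLpNorm_nnreal_pow_eq_lintegral (f := g) (μ := μ) (p := 2) two_ne_zero
  rwa [← ENNReal.pow_le_pow_left_iff two_ne_zero, mul_pow, hf, hg]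

theorem stronglyMeasurable_kdot {E : Type*} [NormedAddCommGroup E] [NormedSpace ℝ E] (H : ℝ)
    {φ : ℝ → E} (hφ : StronglyMeasurable φ) : StronglyMeasurable (Kdot H φ) := by
  set T : Set (ℝ × ℝ) := {p | 0 < p.2 ∧ p.2 < p.1}
  have hT : MeasurableSet T :=
    (measurableSet_lt measurable_const measurable_snd).inter
      (measurableSet_lt measurable_snd measurable_fst)
  set P : ℝ × ℝ → E :=
    T.indicator fun p => ((p.1 - p.2) ^ (H - 3 / 2) * p.2 ^ (1 / 2 - H)) • φ p.2
  have hP : StronglyMeasurable P :=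
    ((by fun_prop : Measurable fun p : ℝ × ℝ => (p.1 - p.2) ^ (H - 3 / 2) * p.2 ^ (1 / 2 - H)
      ).stronglyMeasurable.smul (hφ.comp_measurable measurable_snd)).indicator hT
  have hK : Kdot H φ = fun t => (cH H * t ^ (H - 1 / 2)) • ∫ s, P (t, s) := by
    funext t
    rw [Kdot, ← integral_indicator measurableSet_Ioo]
    congr 1 with s
  rw [hK]
  exact (by fun_prop : Measurable fun t : ℝ => cH H * t ^ (H - 1 / 2)).stronglyMeasurable.smul
    hP.integral_prod_right'

theorem enorm_kdot_sq_le {E : Type*} [NormedAddCommGroup E] [NormedSpace ℝ E] {H : ℝ}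
    (hH : H ∈ Ioo (1 / 2 : ℝ) 1) {φ : ℝ → E} {t : ℝ}
    (hφ : AEStronglyMeasurable φ (volume.restrict (Ioo 0 t))) (ht0 : 0 < t) (ht1 : t ≤ 1) :
    ‖Kdot H φ t‖ₑ ^ 2 ≤
      ENNReal.ofReal (cH H ^ 2 * 2 ^ (H - 1 / 2) * (1 / (H - 1 / 2) + 1 / (2 - 2 * H))) *
        ∫⁻ s in Ioo 0 t, ENNReal.ofReal ((t - s) ^ (H - 3 / 2)) * ‖φ s‖ₑ ^ 2 := by
  obtain ⟨hH1, hH2⟩ := hH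
  set c := cH H * t ^ (H - 1 / 2)
  have hc : 0 ≤ c := mul_nonneg (Real.sqrt_nonneg _) (Real.rpow_nonneg ht0.le _)
  set k : ℝ → ℝ≥0∞ := fun s => ENNReal.ofReal ((t - s) ^ (H - 3 / 2))
  set u : ℝ → ℝ≥0∞ := fun s => ENNReal.ofReal (s ^ (1 / 2 - H))
  have hK : ‖Kdot H φ t‖ₑ ≤ ENNReal.ofReal c * ∫⁻ s in Ioo 0 t, k s * u s * ‖φ s‖ₑ := by
    rw [Kdot, enorm_smul, Real.enorm_eq_ofReal hc]
    gcongr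
    refine (enorm_integral_le_lintegral_enorm _).trans_eq
      (setLIntegral_congr_fun measurableSet_Ioo fun s hs => ?_)
    rw [enorm_smul, Real.enorm_eq_ofReal (mul_nonneg (Real.rpow_nonneg (sub_pos.mpr hs.2).le _)
      (Real.rpow_nonneg hs.1.le _)), ENNReal.ofReal_mul (Real.rpow_nonneg (sub_pos.mpr hs.2).le _)]
  have hrow : ∫⁻ s in Ioo 0 t, k s * u s ^ 2 ≤
      ENNReal.ofReal ((t / 2) ^ (1 / 2 - H) * (1 / (H - 1 / 2) + 1 / (2 - 2 * H))) := calc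
    _ = ∫⁻ s in Ioo 0 t, ENNReal.ofReal ((t - s) ^ (H - 1 / 2 - 1) * s ^ (2 - 2 * H - 1)) := by
      refine setLIntegral_congr_fun measurableSet_Ioo fun s hs => ?_
      rw [← ENNReal.ofReal_pow (Real.rpow_nonneg hs.1.le _), ← Real.rpow_mul_natCast hs.1.le,
        ← ENNReal.ofReal_mul (Real.rpow_nonneg (sub_pos.mpr hs.2).le _)]
      ring_nf
    _ ≤ _ := by
      convert lintegral_Ioo_rpow_sub_mul_rpow_le (a := H - 1 / 2) (b := 2 - 2 * H)
        (by linarith) (by linarith) (by linarith) (by linarith) ht0 using 4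
      ring
  have hweight : c ^ 2 * (t / 2) ^ (1 / 2 - H) ≤ cH H ^ 2 * 2 ^ (H - 1 / 2) := by
    have htα : 0 < t ^ (H - 1 / 2) := Real.rpow_pos_of_pos ht0 _
    rw [mul_pow, mul_assoc]
    gcongr
    rw [show 1 / 2 - H = -(H - 1 / 2) by ring, Real.rpow_neg (by positivity),
      Real.div_rpow ht0.le zero_le_two]
    field_simp
    exact Real.rpow_le_one ht0.le ht1 (by linarith)
  have hB : 0 ≤ 1 / (H - 1 / 2) + 1 / (2 - 2 * H) := by
    have : 0 < H - 1 / 2 := by linarith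
    have : 0 < 2 - 2 * H := by linarith
    positivity
  calc ‖Kdot H φ t‖ₑ ^ 2
      ≤ ENNReal.ofReal c ^ 2 * (∫⁻ s in Ioo 0 t, k s * u s * ‖φ s‖ₑ) ^ 2 := by
        rw [← mul_pow]
        gcongr
    _ ≤ ENNReal.ofReal c ^ 2 * ((∫⁻ s in Ioo 0 t, k s * u s ^ 2) *
          ∫⁻ s in Ioo 0 t, k s * ‖φ s‖ₑ ^ 2) := by
        gcongr
        exact sq_lintegral_mul_mul_le (by fun_prop) (by fun_prop) hφ.enorm
    _ ≤ ENNReal.ofReal (c ^ 2 * (t / 2) ^ (1 / 2 - H) * (1 / (H - 1 / 2) + 1 / (2 - 2 * H))) *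
          ∫⁻ s in Ioo 0 t, k s * ‖φ s‖ₑ ^ 2 := by
        rw [mul_assoc (c ^ 2), ENNReal.ofReal_mul (sq_nonneg c), ENNReal.ofReal_pow hc,
          ← mul_assoc]
        gcongr
    _ ≤ _ := by
        gcongr ?_ * _
        exact ENNReal.ofReal_le_ofReal (mul_le_mul_of_nonneg_right hweight hB)

theorem lintegral_enorm_kdot_sq_le {E : Type*} [NormedAddCommGroup E] [NormedSpace ℝ E] {H : ℝ}
    (hH : H ∈ Ioo (1 / 2 : ℝ) 1) {φ : ℝ → E} (hφ : StronglyMeasurable φ) :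
    ∫⁻ t in Ioc 0 1, ‖Kdot H φ t‖ₑ ^ 2 ≤
      ENNReal.ofReal (cH H ^ 2 * 2 ^ (H - 1 / 2) * (1 / (H - 1 / 2) + 1 / (2 - 2 * H)) *
        (1 / (H - 1 / 2))) * ∫⁻ s in Ioc 0 1, ‖φ s‖ₑ ^ 2 := by
  set A := cH H ^ 2 * 2 ^ (H - 1 / 2) * (1 / (H - 1 / 2) + 1 / (2 - 2 * H))
  have hα : 0 < H - 1 / 2 := by linarith [hH.1]
  have hA : 0 ≤ A := by
    have : 0 < 2 - 2 * H := by linarith [hH.2]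
    positivity
  have hcol (s : ℝ) (hs : s ∈ Ioo 0 1) :
      ∫⁻ t in Ioc s 1, ENNReal.ofReal ((t - s) ^ (H - 3 / 2)) * ‖φ s‖ₑ ^ 2 ≤
        ENNReal.ofReal (1 / (H - 1 / 2)) * ‖φ s‖ₑ ^ 2 := by
    rw [lintegral_mul_const _ (by fun_prop), show H - 3 / 2 = H - 1 / 2 - 1 by ring,
      lintegral_Ioc_rpow_sub_right hα hs.2.le]
    gcongr
    exact Real.rpow_le_one (sub_nonneg.mpr hs.2.le) (by linarith [hs.1]) hα.le
  calc ∫⁻ t in Ioc 0 1, ‖Kdot H φ t‖ₑ ^ 2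
      ≤ ∫⁻ t in Ioc 0 1, ENNReal.ofReal A *
          ∫⁻ s in Ioo 0 t, ENNReal.ofReal ((t - s) ^ (H - 3 / 2)) * ‖φ s‖ₑ ^ 2 :=
        setLIntegral_mono' measurableSet_Ioc fun t ht =>
          enorm_kdot_sq_le hH hφ.aestronglyMeasurable ht.1 ht.2
    _ = ENNReal.ofReal A * ∫⁻ s in Ioo 0 1, ∫⁻ t in Ioc s 1,
          ENNReal.ofReal ((t - s) ^ (H - 3 / 2)) * ‖φ s‖ₑ ^ 2 := by
        rw [lintegral_const_mul' _ _ ENNReal.ofReal_ne_top,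
          lintegral_Ioc_lintegral_Ioo_swap
            (f := fun p => ENNReal.ofReal ((p.1 - p.2) ^ (H - 3 / 2)) * ‖φ p.2‖ₑ ^ 2)
            (by fun_prop)]
    _ ≤ ENNReal.ofReal A * ∫⁻ s in Ioo 0 1, ENNReal.ofReal (1 / (H - 1 / 2)) * ‖φ s‖ₑ ^ 2 :=
        mul_le_mul_right (setLIntegral_mono' measurableSet_Ioo hcol) _
    _ ≤ _ := by
        rw [lintegral_const_mul' _ _ ENNReal.ofReal_ne_top, ← mul_assoc,
          ← ENNReal.ofReal_mul hA]
        exact mul_le_mul_right (lintegral_mono_set Ioo_subset_Ioc_self) _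

theorem kdot_congr_ae {E : Type*} [NormedAddCommGroup E] [NormedSpace ℝ E] (H : ℝ)
    {f g : ℝ → E} {t : ℝ} (h : f =ᵐ[volume.restrict (Ioo 0 t)] g) : Kdot H f t = Kdot H g t := by
  rw [Kdot, Kdot, integral_congr_ae (h.mono fun s hs => congrArg _ hs)]

theorem kdot_bounded_on_L2_general (H : ℝ) (hH : H ∈ Ioo (1 / 2 : ℝ) 1) (n : ℕ) :
    ∃ C : ℝ, 0 < C ∧ ∀ f : ℝ → EuclideanSpace ℝ (Fin n),
      MemLp f 2 (volume.restrict (Icc (0 : ℝ) 1)) →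
        MemLp (Kdot H f) 2 (volume.restrict (Icc (0 : ℝ) 1)) ∧
        eLpNorm (Kdot H f) 2 (volume.restrict (Icc (0 : ℝ) 1)) ≤
          ENNReal.ofReal C * eLpNorm f 2 (volume.restrict (Icc (0 : ℝ) 1)) := by
  set D := cH H ^ 2 * 2 ^ (H - 1 / 2) * (1 / (H - 1 / 2) + 1 / (2 - 2 * H)) * (1 / (H - 1 / 2))
  have hDC : ENNReal.ofReal D ≤ ENNReal.ofReal (√D + 1) ^ 2 := by
    rw [← ENNReal.ofReal_pow (by positivity)]
    gcongr
    nlinarith [Real.sq_sqrt' (x := D), le_max_left D 0, Real.sqrt_nonneg D]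
  refine ⟨√D + 1, by positivity, fun f ⟨hfm, hf_fin⟩ => ?_⟩
  obtain ⟨φ, hφ, hfφ⟩ := hfm
  have hKφ : Kdot H f =ᵐ[volume.restrict (Icc 0 1)] Kdot H φ :=
    (ae_restrict_iff' measurableSet_Icc).mpr <| ae_of_all _ fun t ht => kdot_congr_ae H <|
      ae_restrict_of_ae_restrict_of_subset
        (Ioo_subset_Icc_self.trans (Icc_subset_Icc_right ht.2)) hfφ
  have hbound : eLpNorm (Kdot H f) 2 (volume.restrict (Icc (0 : ℝ) 1)) ≤
      ENNReal.ofReal (√D + 1) * eLpNorm f 2 (volume.restrict (Icc (0 : ℝ) 1)) := by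
    rw [eLpNorm_congr_ae hKφ, eLpNorm_congr_ae hfφ]
    refine eLpNorm_two_le_of_lintegral_sq_le ?_
    rw [← Measure.restrict_congr_set Ioc_ae_eq_Icc]
    exact (lintegral_enorm_kdot_sq_le hH hφ).trans (by gcongr)
  exact ⟨⟨(stronglyMeasurable_kdot H hφ).aestronglyMeasurable.congr hKφ.symm,
    hbound.trans_lt (ENNReal.mul_lt_top ENNReal.ofReal_lt_top hf_fin)⟩, hbound⟩

/-- For every `H ∈ (1/2,1)` and `n ≥ 1`, the operator `K̇_H` is a bounded operator on
`L²([0,1];ℝⁿ)`. -/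
theorem kdot_bounded_on_L2 (H : ℝ) (hH : H ∈ Ioo (1 / 2 : ℝ) 1) (n : ℕ) (hn : 1 ≤ n) :
    ∃ C : ℝ, 0 < C ∧ ∀ f : ℝ → EuclideanSpace ℝ (Fin n),
      MemLp f 2 (volume.restrict (Icc (0 : ℝ) 1)) →
        MemLp (Kdot H f) 2 (volume.restrict (Icc (0 : ℝ) 1)) ∧
        eLpNorm (Kdot H f) 2 (volume.restrict (Icc (0 : ℝ) 1)) ≤
          ENNReal.ofReal C * eLpNorm f 2 (volume.restrict (Icc (0 : ℝ) 1)) :=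
  kdot_bounded_on_L2_general H hH n

end
end

section
/- Let p ≥ 1, b > 0, and let α > 0 and β, γ ∈ ℝ satisfy α + β + γ = 0 and (γ+1)p > 1. Then the operator f ↦ (x ↦ x^β · (I^α_{0+}(y ↦ y^γ f(y)))(x)) is bounded on L^p([0,b]): there exists C > 0 such that for every f ∈ L^p([0,b]) the resulting function lies in L^p([0,b]) with norm at most C times the L^p norm of f. -/
/-!
Substituting `y = x t` turns the operator into an average of dilates,
`x^β I^α_{0+}(y^γ f)(x) = Γ(α)⁻¹ ∫₀¹ t^γ (1-t)^{α-1} f(x t) dt`, because `α + β + γ = 0` makes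
the kernel homogeneous of degree `-1`. As `‖f(· t)‖_p ≤ t^{-1/p} ‖f‖_p`, Jensen's inequality for
the weight `t^{γ-1/p} (1-t)^{α-1} dt` followed by Tonelli bounds the operator norm by
`Γ(α)⁻¹ ∫₀¹ t^{γ-1/p} (1-t)^{α-1} dt = B(γ + 1 - 1/p, α) / Γ(α)`, which is finite exactly when
`(γ + 1) p > 1`.
-/

open MeasureTheory Set

noncomputable section

/-- Left-sided Riemann–Liouville fractional integral
`(I^α_{0+}f)(x) = (1/Γ(α)) ∫_0^x (x-y)^{α-1} f(y) dy`. -/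
def Iplus (α : ℝ) (f : ℝ → ℝ) (x : ℝ) : ℝ :=
  (1 / Real.Gamma α) * ∫ y in Ioo (0 : ℝ) x, (x - y) ^ (α - 1) * f y

open scoped ENNReal

theorem rpow_lintegral_mul_le {Ω : Type*} [MeasurableSpace Ω] {μ : Measure Ω} {p : ℝ}
    (hp : 1 ≤ p) {w h : Ω → ℝ≥0∞} (hw : Measurable w) (hh : Measurable h) :
    (∫⁻ a, w a * h a ∂μ) ^ p ≤ (∫⁻ a, w a ∂μ) ^ (p - 1) * ∫⁻ a, w a * h a ^ p ∂μ := by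
  have hp0 : 0 < p := one_pos.trans_le hp
  have hLp := eLpNorm'_le_eLpNorm'_mul_rpow_measure_univ (μ := μ.withDensity w) one_pos hp
    hh.aestronglyMeasurable
  simp only [eLpNorm', enorm_eq_self, ENNReal.rpow_one, div_one] at hLp
  rw [lintegral_withDensity_eq_lintegral_mul _ hw hh,
    lintegral_withDensity_eq_lintegral_mul _ hw (hh.pow_const p),
    withDensity_apply _ MeasurableSet.univ, Measure.restrict_univ] at hLp
  calc (∫⁻ a, w a * h a ∂μ) ^ p
      ≤ ((∫⁻ a, w a * h a ^ p ∂μ) ^ (1 / p) * (∫⁻ a, w a ∂μ) ^ (1 - 1 / p)) ^ p :=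
        ENNReal.rpow_le_rpow hLp hp0.le
    _ = (∫⁻ a, w a ∂μ) ^ (p - 1) * ∫⁻ a, w a * h a ^ p ∂μ := by
        rw [ENNReal.mul_rpow_of_nonneg _ _ hp0.le, ← ENNReal.rpow_mul, ← ENNReal.rpow_mul,
          one_div_mul_cancel hp0.ne', ENNReal.rpow_one, sub_mul, one_div_mul_cancel hp0.ne',
          one_mul, mul_comm]

theorem lintegral_comp_mul_left_eq (F : ℝ → ℝ≥0∞) {a : ℝ} (ha : a ≠ 0) :
    ∫⁻ x, F (a * x) = ENNReal.ofReal |a⁻¹| * ∫⁻ x, F x := by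
  rw [← smul_eq_mul, ← lintegral_smul_measure, ← Real.map_volume_mul_left ha]
  exact (lintegral_map_equiv F (Homeomorph.mulLeft₀ a ha).toMeasurableEquiv).symm

theorem setLIntegral_Ioo_zero_eq_mul (F : ℝ → ℝ≥0∞) {x : ℝ} (hx : 0 < x) :
    ∫⁻ y in Ioo 0 x, F y = ENNReal.ofReal x * ∫⁻ t in Ioo 0 1, F (x * t) := by
  have hmem : ∀ t, x * t ∈ Ioo 0 x ↔ t ∈ Ioo 0 1 := fun t => by
    simp only [mem_Ioo, mul_pos_iff_of_pos_left hx, mul_lt_iff_lt_one_right hx]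
  have hind : (fun t => (Ioo 0 x).indicator F (x * t)) = (Ioo 0 1).indicator (F <| x * ·) := by
    ext t
    simp only [indicator, hmem]
  rw [← lintegral_indicator measurableSet_Ioo, ← lintegral_indicator measurableSet_Ioo, ← hind,
    lintegral_comp_mul_left_eq _ hx.ne', ← mul_assoc, abs_inv, abs_of_pos hx,
    ← ENNReal.ofReal_mul hx.le, mul_inv_cancel₀ hx.ne', ENNReal.ofReal_one, one_mul]

theorem lintegral_rpow_lintegral_dilation_le {p : ℝ} (hp : 1 ≤ p) {w G : ℝ → ℝ≥0∞}
    (hw : Measurable w) (hG : Measurable G) :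
    ∫⁻ x, (∫⁻ t in Ioo 0 1, w t * G (x * t)) ^ p ≤
      (∫⁻ t in Ioo 0 1, w t * ENNReal.ofReal t ^ (-p⁻¹)) ^ p * ∫⁻ y, G y ^ p := by
  have hp0 : 0 < p := one_pos.trans_le hp
  set v : ℝ → ℝ≥0∞ := fun t => w t * ENNReal.ofReal t ^ (-p⁻¹)
  set B := ∫⁻ t in Ioo 0 1, v t
  have hv : Measurable v := by fun_prop
  -- `w t * G (x t) = v t * (t ^ (1/p) G (x t))`, and Jensen applies to the weight `v`
  have hjensen : ∀ x, (∫⁻ t in Ioo 0 1, w t * G (x * t)) ^ p ≤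
      B ^ (p - 1) * ∫⁻ t in Ioo 0 1, v t * ENNReal.ofReal t * G (x * t) ^ p := by
    intro x
    have hsplit : ∫⁻ t in Ioo 0 1, w t * G (x * t) =
        ∫⁻ t in Ioo 0 1, v t * (ENNReal.ofReal t ^ p⁻¹ * G (x * t)) := by
      refine setLIntegral_congr_fun measurableSet_Ioo fun t ht => ?_
      rw [← mul_assoc, mul_assoc (w t), ← ENNReal.rpow_add _ _ (ENNReal.ofReal_pos.2 ht.1).ne'
        ENNReal.ofReal_ne_top, neg_add_cancel, ENNReal.rpow_zero, mul_one]
    have hpow : ∀ t, (ENNReal.ofReal t ^ p⁻¹ * G (x * t)) ^ p = ENNReal.ofReal t * G (x * t) ^ p :=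
      fun t => by
        rw [ENNReal.mul_rpow_of_nonneg _ _ hp0.le, ← ENNReal.rpow_mul, inv_mul_cancel₀ hp0.ne',
          ENNReal.rpow_one]
    rw [hsplit]
    refine (rpow_lintegral_mul_le hp hv (by fun_prop)).trans_eq ?_
    simp only [hpow, mul_assoc]
    rfl
  have hdilate : ∀ t ∈ Ioo (0 : ℝ) 1, ENNReal.ofReal t * ∫⁻ x, G (x * t) ^ p = ∫⁻ y, G y ^ p := by
    intro t ht
    simp_rw [mul_comm _ t]
    rw [lintegral_comp_mul_left_eq (fun y => G y ^ p) ht.1.ne', ← mul_assoc,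
      ← ENNReal.ofReal_mul ht.1.le, abs_of_pos (inv_pos.2 ht.1), mul_inv_cancel₀ ht.1.ne',
      ENNReal.ofReal_one, one_mul]
  calc ∫⁻ x, (∫⁻ t in Ioo 0 1, w t * G (x * t)) ^ p
      ≤ ∫⁻ x, B ^ (p - 1) * ∫⁻ t in Ioo 0 1, v t * ENNReal.ofReal t * G (x * t) ^ p :=
        lintegral_mono hjensen
    _ = B ^ (p - 1) * ∫⁻ t in Ioo 0 1, v t * (ENNReal.ofReal t * ∫⁻ x, G (x * t) ^ p) := by
        rw [lintegral_const_mul _ (by fun_prop), lintegral_lintegral_swap (by fun_prop)]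
        congr 1
        refine lintegral_congr fun t => ?_
        rw [← mul_assoc]
        exact lintegral_const_mul _ ((hG.comp (measurable_mul_const t)).pow_const p)
    _ = B ^ (p - 1) * (B * ∫⁻ y, G y ^ p) := by
        rw [setLIntegral_congr_fun measurableSet_Ioo fun t ht => by rw [hdilate t ht],
          lintegral_mul_const _ hv]
    _ = B ^ p * ∫⁻ y, G y ^ p := by
        rw [← mul_assoc]
        congr 1
        calc B ^ (p - 1) * B = B ^ (p - 1) * B ^ (1 : ℝ) := by rw [ENNReal.rpow_one]
          _ = B ^ p := by
            rw [← ENNReal.rpow_add_of_nonneg _ _ (by linarith) zero_le_one, sub_add_cancel]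

theorem eLpNorm_lintegral_dilation_le {p : ℝ} (hp : 1 ≤ p) {w G : ℝ → ℝ≥0∞}
    (hw : Measurable w) (hG : Measurable G) :
    eLpNorm (fun x => ∫⁻ t in Ioo 0 1, w t * G (x * t)) (ENNReal.ofReal p) volume ≤
      (∫⁻ t in Ioo 0 1, w t * ENNReal.ofReal t ^ (-p⁻¹)) * eLpNorm G (ENNReal.ofReal p) volume := by
  have hp0 : 0 < p := one_pos.trans_le hp
  simp only [eLpNorm_eq_lintegral_rpow_enorm_toReal (ENNReal.ofReal_pos.2 hp0).ne'
    ENNReal.ofReal_ne_top, ENNReal.toReal_ofReal hp0.le, enorm_eq_self]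
  calc (∫⁻ x, (∫⁻ t in Ioo 0 1, w t * G (x * t)) ^ p) ^ (1 / p)
      ≤ ((∫⁻ t in Ioo 0 1, w t * ENNReal.ofReal t ^ (-p⁻¹)) ^ p * ∫⁻ y, G y ^ p) ^ (1 / p) :=
        ENNReal.rpow_le_rpow (lintegral_rpow_lintegral_dilation_le hp hw hG) (by positivity)
    _ = _ := by
        rw [ENNReal.mul_rpow_of_nonneg _ _ (by positivity), ← ENNReal.rpow_mul,
          mul_one_div_cancel hp0.ne', ENNReal.rpow_one]

theorem setLIntegral_rpow_mul_one_sub_rpow_eq_beta {a c : ℝ} (ha : 0 < a) (hc : 0 < c) :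
    ∫⁻ t in Ioo 0 1, ENNReal.ofReal (t ^ (a - 1) * (1 - t) ^ (c - 1)) =
      ENNReal.ofReal (ProbabilityTheory.beta a c) := by
  have hB := ProbabilityTheory.beta_pos ha hc
  have h := ProbabilityTheory.lintegral_betaPDF_eq_one ha hc
  simp_rw [ProbabilityTheory.lintegral_betaPDF, mul_assoc,
    ENNReal.ofReal_mul (one_div_pos.2 hB).le] at h
  rw [lintegral_const_mul _ (by fun_prop), ← ENNReal.eq_div_iff (by positivity)
    ENNReal.ofReal_ne_top] at h
  rw [h, one_div, ← ENNReal.ofReal_inv_of_pos (one_div_pos.2 hB), one_div, inv_inv]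

theorem Iplus_congr_ae {α x : ℝ} {h₁ h₂ : ℝ → ℝ} (h : h₁ =ᵐ[volume.restrict (Ioo 0 x)] h₂) :
    Iplus α h₁ x = Iplus α h₂ x := by
  unfold Iplus
  congr 1
  exact integral_congr_ae (h.mono fun y hy => congrArg _ hy)

theorem measurable_Iplus (α : ℝ) {h : ℝ → ℝ} (hh : Measurable h) : Measurable (Iplus α h) := by
  set S : Set (ℝ × ℝ) := {q | 0 < q.2 ∧ q.2 < q.1}
  have hS : MeasurableSet S :=
    (measurableSet_lt measurable_const measurable_snd).inter
      (measurableSet_lt measurable_snd measurable_fst)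
  have hint : StronglyMeasurable fun x =>
      ∫ y, S.indicator (fun q => (q.1 - q.2) ^ (α - 1) * h q.2) (x, y) :=
    ((Measurable.indicator (by fun_prop) hS).stronglyMeasurable).integral_prod_right'
  have hIplus : Iplus α h = fun x =>
      1 / Real.Gamma α * ∫ y, S.indicator (fun q => (q.1 - q.2) ^ (α - 1) * h q.2) (x, y) := by
    ext x
    rw [Iplus, ← integral_indicator measurableSet_Ioo]
    rfl
  rw [hIplus]
  exact (hint.const_mul _).measurable

theorem enorm_rpow_mul_Iplus_le {α β γ : ℝ} (hα : 0 < α) (hsum : α + β + γ = 0) (g : ℝ → ℝ)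
    {x : ℝ} (hx : 0 < x) :
    ‖x ^ β * Iplus α (fun y => y ^ γ * g y) x‖ₑ ≤
      ∫⁻ t in Ioo 0 1,
        ENNReal.ofReal (t ^ γ * (1 - t) ^ (α - 1) / Real.Gamma α) * ‖g (x * t)‖ₑ := by
  have hΓ := Real.Gamma_pos_of_pos hα
  have hx1 : x ^ β * x * x ^ (α - 1) * x ^ γ = 1 := by
    calc x ^ β * x * x ^ (α - 1) * x ^ γ = x ^ (β + 1 + (α - 1) + γ) := by
          rw [Real.rpow_add hx, Real.rpow_add hx, Real.rpow_add_one hx.ne']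
      _ = 1 := by rw [show β + 1 + (α - 1) + γ = 0 by linarith, Real.rpow_zero]
  calc ‖x ^ β * Iplus α (fun y => y ^ γ * g y) x‖ₑ
      = ENNReal.ofReal (x ^ β / Real.Gamma α) *
          ‖∫ y in Ioo 0 x, (x - y) ^ (α - 1) * (y ^ γ * g y)‖ₑ := by
        rw [Iplus, enorm_mul, enorm_mul, Real.enorm_of_nonneg (by positivity),
          Real.enorm_of_nonneg (by positivity), ← mul_assoc, ← ENNReal.ofReal_mul (by positivity),
          mul_one_div]
    _ ≤ ENNReal.ofReal (x ^ β / Real.Gamma α) *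
          ∫⁻ y in Ioo 0 x, ‖(x - y) ^ (α - 1) * (y ^ γ * g y)‖ₑ := by
        gcongr
        exact enorm_integral_le_lintegral_enorm _
    _ = ∫⁻ t in Ioo 0 1, ENNReal.ofReal (x ^ β / Real.Gamma α * x) *
          ‖(x - x * t) ^ (α - 1) * ((x * t) ^ γ * g (x * t))‖ₑ := by
        rw [setLIntegral_Ioo_zero_eq_mul _ hx, ← mul_assoc, ← ENNReal.ofReal_mul (by positivity),
          lintegral_const_mul' _ _ ENNReal.ofReal_ne_top]
    _ = _ := by
        refine setLIntegral_congr_fun measurableSet_Ioo fun t ht => ?_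
        have h1t : 0 < 1 - t := sub_pos.2 ht.2
        have hxt : x - x * t = x * (1 - t) := by ring
        have hnonneg : 0 ≤ (x - x * t) ^ (α - 1) * (x * t) ^ γ :=
          mul_nonneg (Real.rpow_nonneg (by rw [hxt]; exact (mul_pos hx h1t).le) _)
            (Real.rpow_nonneg (mul_pos hx ht.1).le _)
        rw [← mul_assoc, enorm_mul, Real.enorm_of_nonneg hnonneg, ← mul_assoc,
          ← ENNReal.ofReal_mul (by positivity)]
        congr 2
        rw [hxt, Real.mul_rpow hx.le h1t.le, Real.mul_rpow hx.le ht.1.le]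
        linear_combination (t ^ γ * (1 - t) ^ (α - 1) / Real.Gamma α) * hx1

theorem eLpNorm_rpow_mul_Iplus_le {p b α β γ : ℝ} (hp : 1 ≤ p) (hα : 0 < α)
    (hsum : α + β + γ = 0) (hγp : p⁻¹ < γ + 1) {g : ℝ → ℝ} (hg : Measurable g) :
    eLpNorm (fun x => x ^ β * Iplus α (fun y => y ^ γ * g y) x) (ENNReal.ofReal p)
        (volume.restrict (Ioo 0 b)) ≤
      ENNReal.ofReal (ProbabilityTheory.beta (γ + 1 - p⁻¹) α / Real.Gamma α) *
        eLpNorm g (ENNReal.ofReal p) (volume.restrict (Ioo 0 b)) := by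
  have hΓ := Real.Gamma_pos_of_pos hα
  set w : ℝ → ℝ≥0∞ := fun t => ENNReal.ofReal (t ^ γ * (1 - t) ^ (α - 1) / Real.Gamma α)
  set G : ℝ → ℝ≥0∞ := (Ioo 0 b).indicator fun y => ‖g y‖ₑ
  have hG : Measurable G := (by fun_prop : Measurable fun y => ‖g y‖ₑ).indicator measurableSet_Ioo
  have hpointwise : ∀ᵐ x ∂volume.restrict (Ioo 0 b),
      ‖x ^ β * Iplus α (fun y => y ^ γ * g y) x‖ₑ ≤ ‖∫⁻ t in Ioo 0 1, w t * G (x * t)‖ₑ := by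
    refine ae_restrict_of_forall_mem measurableSet_Ioo fun x hx => ?_
    refine (enorm_rpow_mul_Iplus_le hα hsum g hx.1).trans_eq ?_
    refine setLIntegral_congr_fun measurableSet_Ioo fun t ht => ?_
    have hxt : x * t ∈ Ioo 0 b := ⟨mul_pos hx.1 ht.1, by nlinarith [hx.2, ht.2, hx.1, ht.1]⟩
    simp only [w, G, indicator_of_mem hxt]
  have hconst : ∫⁻ t in Ioo 0 1, w t * ENNReal.ofReal t ^ (-p⁻¹) =
      ENNReal.ofReal (ProbabilityTheory.beta (γ + 1 - p⁻¹) α / Real.Gamma α) := by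
    have hweight : ∀ t ∈ Ioo (0 : ℝ) 1, w t * ENNReal.ofReal t ^ (-p⁻¹) = ENNReal.ofReal
        (Real.Gamma α)⁻¹ * ENNReal.ofReal (t ^ (γ + 1 - p⁻¹ - 1) * (1 - t) ^ (α - 1)) := by
      intro t ht
      have hw : 0 ≤ t ^ γ * (1 - t) ^ (α - 1) / Real.Gamma α := div_nonneg
        (mul_nonneg (Real.rpow_nonneg ht.1.le _) (Real.rpow_nonneg (sub_pos.2 ht.2).le _)) hΓ.le
      rw [ENNReal.ofReal_rpow_of_pos ht.1, ← ENNReal.ofReal_mul hw,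
        ← ENNReal.ofReal_mul (inv_nonneg.2 hΓ.le), show γ + 1 - p⁻¹ - 1 = γ + -p⁻¹ by ring,
        Real.rpow_add ht.1]
      ring_nf
    rw [setLIntegral_congr_fun measurableSet_Ioo hweight,
      lintegral_const_mul' _ _ ENNReal.ofReal_ne_top,
      setLIntegral_rpow_mul_one_sub_rpow_eq_beta (by linarith) hα,
      ← ENNReal.ofReal_mul (inv_nonneg.2 hΓ.le), inv_mul_eq_div]
  calc eLpNorm (fun x => x ^ β * Iplus α (fun y => y ^ γ * g y) x) (ENNReal.ofReal p)
        (volume.restrict (Ioo 0 b))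
      ≤ eLpNorm (fun x => ∫⁻ t in Ioo 0 1, w t * G (x * t)) (ENNReal.ofReal p)
          (volume.restrict (Ioo 0 b)) := eLpNorm_mono_enorm_ae hpointwise
    _ ≤ eLpNorm (fun x => ∫⁻ t in Ioo 0 1, w t * G (x * t)) (ENNReal.ofReal p) volume :=
        eLpNorm_mono_measure _ Measure.restrict_le_self
    _ ≤ (∫⁻ t in Ioo 0 1, w t * ENNReal.ofReal t ^ (-p⁻¹)) *
          eLpNorm G (ENNReal.ofReal p) volume :=
        eLpNorm_lintegral_dilation_le hp (by fun_prop) hG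
    _ = _ := by
        rw [hconst, eLpNorm_indicator_eq_eLpNorm_restrict measurableSet_Ioo, eLpNorm_enorm]

theorem fracIntegral_left_weighted_bounded_general
    (p b α β γ : ℝ) (hp : 1 ≤ p) (hα : 0 < α)
    (hsum : α + β + γ = 0) (hγp : (γ + 1) * p > 1) :
    ∃ C : ℝ, 0 < C ∧ ∀ f : ℝ → ℝ,
      MemLp f (ENNReal.ofReal p) (volume.restrict (Icc (0 : ℝ) b)) →
        MemLp (fun x => x ^ β * Iplus α (fun y => y ^ γ * f y) x)
          (ENNReal.ofReal p) (volume.restrict (Icc (0 : ℝ) b)) ∧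
        eLpNorm (fun x => x ^ β * Iplus α (fun y => y ^ γ * f y) x)
            (ENNReal.ofReal p) (volume.restrict (Icc (0 : ℝ) b)) ≤
          ENNReal.ofReal C * eLpNorm f (ENNReal.ofReal p) (volume.restrict (Icc (0 : ℝ) b)) := by
  have hp0 : 0 < p := one_pos.trans_le hp
  have hγp' : p⁻¹ < γ + 1 := by rwa [inv_lt_iff_one_lt_mul₀ hp0]
  refine ⟨ProbabilityTheory.beta (γ + 1 - p⁻¹) α / Real.Gamma α,
    div_pos (ProbabilityTheory.beta_pos (by linarith) hα) (Real.Gamma_pos_of_pos hα),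
    fun f hf => ?_⟩
  set μ := volume.restrict (Icc (0 : ℝ) b)
  obtain ⟨g, hg, hfg⟩ := hf.aestronglyMeasurable.aemeasurable
  have hT : (fun x => x ^ β * Iplus α (fun y => y ^ γ * f y) x) =ᵐ[μ]
      fun x => x ^ β * Iplus α (fun y => y ^ γ * g y) x := by
    refine ae_restrict_of_forall_mem measurableSet_Icc fun x hx => ?_
    have hsub : Ioo 0 x ⊆ Icc 0 b := fun y hy => ⟨hy.1.le, hy.2.le.trans hx.2⟩
    dsimp only
    rw [Iplus_congr_ae ((ae_restrict_of_ae_restrict_of_subset hsub hfg).mono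
      fun y hy => congrArg (y ^ γ * ·) hy)]
  have hbound := eLpNorm_rpow_mul_Iplus_le (b := b) hp hα hsum hγp' hg
  rw [Measure.restrict_congr_set Ioo_ae_eq_Icc] at hbound
  rw [eLpNorm_congr_ae hT, eLpNorm_congr_ae hfg]
  refine ⟨MemLp.ae_eq hT.symm ⟨?_, hbound.trans_lt ?_⟩, hbound⟩
  · exact ((by fun_prop : Measurable fun x : ℝ => x ^ β).mul
      (measurable_Iplus α (by fun_prop))).aestronglyMeasurable
  · exact ENNReal.mul_lt_top ENNReal.ofReal_lt_top ((eLpNorm_congr_ae hfg).symm ▸ hf.2)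

/-- For `p ≥ 1`, `b > 0`, `α > 0`, `α + β + γ = 0` and `(γ+1)p > 1`, the operator
`f ↦ (x ↦ x^β (I^α_{0+}(y ↦ y^γ f(y)))(x))` is bounded on `L^p([0,b])`. -/
theorem fracIntegral_left_weighted_bounded
    (p b α β γ : ℝ) (hp : 1 ≤ p) (hb : 0 < b) (hα : 0 < α)
    (hsum : α + β + γ = 0) (hγp : (γ + 1) * p > 1) :
    ∃ C : ℝ, 0 < C ∧ ∀ f : ℝ → ℝ,
      MemLp f (ENNReal.ofReal p) (volume.restrict (Icc (0 : ℝ) b)) →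
        MemLp (fun x => x ^ β * Iplus α (fun y => y ^ γ * f y) x)
          (ENNReal.ofReal p) (volume.restrict (Icc (0 : ℝ) b)) ∧
        eLpNorm (fun x => x ^ β * Iplus α (fun y => y ^ γ * f y) x)
            (ENNReal.ofReal p) (volume.restrict (Icc (0 : ℝ) b)) ≤
          ENNReal.ofReal C * eLpNorm f (ENNReal.ofReal p) (volume.restrict (Icc (0 : ℝ) b)) :=
  fracIntegral_left_weighted_bounded_general p b α β γ hp hα hsum hγp

end
end

section
/- Let p ≥ 1, b > 0, and let α > 0 and β, γ ∈ ℝ satisfy α + β + γ = 0 and (α+γ)p < 1. Then the operator f ↦ (x ↦ x^β · (I^α_{b−}(y ↦ y^γ f(y)))(x)) is bounded on L^p([0,b]): there exists C > 0 such that for every f ∈ L^p([0,b]) the resulting function lies in L^p([0,b]) with norm at most C times the L^p norm of f. -/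
open MeasureTheory Set intervalIntegral

open scoped ENNReal

noncomputable section

/-- Right-sided Riemann–Liouville fractional integral on `[0,b]`:
`(I^α_{b-}f)(x) = (1/Γ(α)) ∫_x^b (y-x)^{α-1} f(y) dy`. -/
def Iminus (α b : ℝ) (f : ℝ → ℝ) (x : ℝ) : ℝ :=
  (1 / Real.Gamma α) * ∫ y in Ioo x b, (y - x) ^ (α - 1) * f y

private lemma rpow_le_two_rpow {r t u : ℝ} (ht : 0 < t) (hu : 0 < u) (h1 : t / 2 ≤ u)
    (h2 : u ≤ 2 * t) : u ^ r ≤ 2 ^ |r| * t ^ r := by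
  rcases le_or_gt 0 r with hr | hr
  · calc u ^ r ≤ (2 * t) ^ r := Real.rpow_le_rpow hu.le h2 hr
      _ = 2 ^ r * t ^ r := Real.mul_rpow (by norm_num) ht.le
      _ ≤ 2 ^ |r| * t ^ r := by
          gcongr
          · exact one_le_two
          · exact le_abs_self r
  · calc u ^ r ≤ (t / 2) ^ r := Real.rpow_le_rpow_of_nonpos (by linarith) h1 hr.le
      _ = 2 ^ |r| * t ^ r := by
          rw [div_eq_mul_inv, Real.mul_rpow ht.le (by norm_num), Real.inv_rpow (by norm_num),
            ← Real.rpow_neg (by norm_num), abs_of_neg hr, mul_comm]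

/-- Tail estimate: `∫_x^∞ (y-x)^(α-1) y^c dy ≤ C x^(α+c)` when `α > 0` and `α + c < 0`. -/
private lemma aux_tail {α c : ℝ} (hα : 0 < α) (hc : α + c < 0) :
    ∃ C : ℝ, 0 < C ∧ ∀ x : ℝ, 0 < x →
      ∫⁻ y in Ioi x, ENNReal.ofReal ((y - x) ^ (α - 1) * y ^ c) ≤
        ENNReal.ofReal (C * x ^ (α + c)) := by
  have hD : (0 : ℝ) < -(α + c) := by linarith
  set C₁ : ℝ := 2 ^ |c| / α with hC₁
  set C₂ : ℝ := 2 ^ |α - 1| * (2 ^ (α + c) / (-(α + c))) with hC₂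
  have hC₁pos : 0 < C₁ := div_pos (Real.rpow_pos_of_pos two_pos _) hα
  have hC₂pos : 0 < C₂ := by
    apply mul_pos (Real.rpow_pos_of_pos two_pos _)
    exact div_pos (Real.rpow_pos_of_pos two_pos _) hD
  refine ⟨C₁ + C₂, by linarith, fun x hx => ?_⟩
  have hx2 : x < 2 * x := by linarith
  rw [← Ioc_union_Ioi_eq_Ioi hx2.le,
    lintegral_union measurableSet_Ioi (Set.Ioc_disjoint_Ioi le_rfl),
    add_mul, ENNReal.ofReal_add (by positivity) (by positivity)]
  have part1 : ∫⁻ y in Ioc x (2 * x), ENNReal.ofReal ((y - x) ^ (α - 1) * y ^ c) ≤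
      ENNReal.ofReal (C₁ * x ^ (α + c)) := by
    calc ∫⁻ y in Ioc x (2 * x), ENNReal.ofReal ((y - x) ^ (α - 1) * y ^ c)
        ≤ ∫⁻ y in Ioc x (2 * x), ENNReal.ofReal (2 ^ |c| * x ^ c * (y - x) ^ (α - 1)) := by
          refine setLIntegral_mono' measurableSet_Ioc fun y hy => ?_
          apply ENNReal.ofReal_le_ofReal
          have hy0 : 0 < y := hx.trans hy.1
          have hyc : y ^ c ≤ 2 ^ |c| * x ^ c :=
            rpow_le_two_rpow hx hy0 (by linarith [hy.1.le]) hy.2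
          calc (y - x) ^ (α - 1) * y ^ c ≤ (y - x) ^ (α - 1) * (2 ^ |c| * x ^ c) := by
                gcongr
                exact Real.rpow_nonneg (by linarith [hy.1]) _
            _ = 2 ^ |c| * x ^ c * (y - x) ^ (α - 1) := by ring
      _ = ENNReal.ofReal (2 ^ |c| * x ^ c) *
            ∫⁻ y in Ioc x (2 * x), ENNReal.ofReal ((y - x) ^ (α - 1)) := by
          rw [← lintegral_const_mul' _ _ ENNReal.ofReal_ne_top]
          congr 1; ext y; rw [← ENNReal.ofReal_mul (by positivity)]
      _ = ENNReal.ofReal (2 ^ |c| * x ^ c) * ENNReal.ofReal (x ^ α / α) := by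
          congr 1
          have hint : IntervalIntegrable (fun y => (y - x) ^ (α - 1)) volume x (2 * x) := by
            have := (intervalIntegral.intervalIntegrable_rpow' (a := 0) (b := x) (r := α - 1)
              (by linarith)).comp_sub_right x
            simpa [two_mul] using this
          rw [← ofReal_integral_eq_lintegral_ofReal hint.1]
          · congr 1
            rw [← integral_of_le hx2.le,
              integral_comp_sub_right (fun t => t ^ (α - 1)) x]
            have hxx : 2 * x - x = x := by ring
            rw [sub_self, hxx, integral_rpow (Or.inl (by linarith)),
              Real.zero_rpow (by linarith), sub_add_cancel]
            norm_num
          · filter_upwards [ae_restrict_mem measurableSet_Ioc] with y hy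
            exact Real.rpow_nonneg (by linarith [hy.1]) _
      _ = ENNReal.ofReal (C₁ * x ^ (α + c)) := by
          rw [← ENNReal.ofReal_mul (by positivity)]
          congr 1
          rw [hC₁, Real.rpow_add hx]
          field_simp
  have part2 : ∫⁻ y in Ioi (2 * x), ENNReal.ofReal ((y - x) ^ (α - 1) * y ^ c) ≤
      ENNReal.ofReal (C₂ * x ^ (α + c)) := by
    calc ∫⁻ y in Ioi (2 * x), ENNReal.ofReal ((y - x) ^ (α - 1) * y ^ c)
        ≤ ∫⁻ y in Ioi (2 * x), ENNReal.ofReal (2 ^ |α - 1| * y ^ (α - 1 + c)) := by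
          refine setLIntegral_mono' measurableSet_Ioi fun y hy => ?_
          apply ENNReal.ofReal_le_ofReal
          have hy0 : 0 < y := by have := hy; simp only [mem_Ioi] at this; linarith
          simp only [mem_Ioi] at hy
          have h1 : (y - x) ^ (α - 1) ≤ 2 ^ |α - 1| * y ^ (α - 1) :=
            rpow_le_two_rpow hy0 (by linarith) (by linarith) (by linarith)
          calc (y - x) ^ (α - 1) * y ^ c ≤ 2 ^ |α - 1| * y ^ (α - 1) * y ^ c :=
                mul_le_mul_of_nonneg_right h1 (Real.rpow_nonneg hy0.le _)
            _ = 2 ^ |α - 1| * y ^ (α - 1 + c) := by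
                rw [Real.rpow_add hy0, mul_assoc]
      _ = ENNReal.ofReal (2 ^ |α - 1|) *
            ∫⁻ y in Ioi (2 * x), ENNReal.ofReal (y ^ (α - 1 + c)) := by
          rw [← lintegral_const_mul' _ _ ENNReal.ofReal_ne_top]
          congr 1; ext y; rw [← ENNReal.ofReal_mul (by positivity)]
      _ ≤ ENNReal.ofReal (C₂ * x ^ (α + c)) := by
          have h2x : (0 : ℝ) < 2 * x := by linarith
          have hlt : α - 1 + c < -1 := by linarith
          rw [← ofReal_integral_eq_lintegral_ofReal
            (integrableOn_Ioi_rpow_of_lt hlt h2x)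
            (by filter_upwards [ae_restrict_mem measurableSet_Ioi] with y hy using
              Real.rpow_nonneg (by simp only [mem_Ioi] at hy; linarith) _)]
          rw [integral_Ioi_rpow_of_lt hlt h2x, ← ENNReal.ofReal_mul (by positivity)]
          apply ENNReal.ofReal_le_ofReal
          have : α - 1 + c + 1 = α + c := by ring
          rw [this]
          rw [Real.mul_rpow (by norm_num) hx.le, hC₂]
          have hne : α + c ≠ 0 := by linarith
          have key : -(2 ^ (α + c) * x ^ (α + c)) / (α + c) =
              2 ^ (α + c) / (-(α + c)) * x ^ (α + c) := by
            rw [neg_div, ← div_neg, mul_div_right_comm]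
          rw [key, ← mul_assoc]
  exact add_le_add part1 part2

end

noncomputable section

/-- Near estimate: `∫_0^y x^e (y-x)^(α-1) dx ≤ C y^(α+e)` when `α > 0` and `e > -1`. -/
private lemma aux_near {α e : ℝ} (hα : 0 < α) (he : -1 < e) :
    ∃ C : ℝ, 0 < C ∧ ∀ y : ℝ, 0 < y →
      ∫⁻ x in Ioo 0 y, ENNReal.ofReal (x ^ e * (y - x) ^ (α - 1)) ≤
        ENNReal.ofReal (C * y ^ (α + e)) := by
  have he1 : (0 : ℝ) < e + 1 := by linarith
  set C₁ : ℝ := 2 ^ |α - 1| * ((1 / 2 : ℝ) ^ (e + 1) / (e + 1)) with hC₁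
  set C₂ : ℝ := 2 ^ |e| * ((1 / 2 : ℝ) ^ α / α) with hC₂
  have hC₁pos : 0 < C₁ :=
    mul_pos (Real.rpow_pos_of_pos two_pos _)
      (div_pos (Real.rpow_pos_of_pos one_half_pos _) he1)
  have hC₂pos : 0 < C₂ :=
    mul_pos (Real.rpow_pos_of_pos two_pos _)
      (div_pos (Real.rpow_pos_of_pos one_half_pos _) hα)
  refine ⟨C₁ + C₂, by linarith, fun y hy => ?_⟩
  have hy2 : y / 2 < y := by linarith
  rw [← Ioc_union_Ioo_eq_Ioo (by linarith : (0:ℝ) ≤ y / 2) hy2,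
    lintegral_union measurableSet_Ioo
      ((Set.Ioc_disjoint_Ioi le_rfl).mono_right Ioo_subset_Ioi_self),
    add_mul, ENNReal.ofReal_add (by positivity) (by positivity)]
  have part1 : ∫⁻ x in Ioc 0 (y / 2), ENNReal.ofReal (x ^ e * (y - x) ^ (α - 1)) ≤
      ENNReal.ofReal (C₁ * y ^ (α + e)) := by
    calc ∫⁻ x in Ioc 0 (y / 2), ENNReal.ofReal (x ^ e * (y - x) ^ (α - 1))
        ≤ ∫⁻ x in Ioc 0 (y / 2), ENNReal.ofReal (2 ^ |α - 1| * y ^ (α - 1) * x ^ e) := by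
          refine setLIntegral_mono' measurableSet_Ioc fun x hx => ?_
          apply ENNReal.ofReal_le_ofReal
          have h1 : (y - x) ^ (α - 1) ≤ 2 ^ |α - 1| * y ^ (α - 1) :=
            rpow_le_two_rpow hy (by linarith [hx.1, hx.2]) (by linarith [hx.2])
              (by linarith [hx.1])
          calc x ^ e * (y - x) ^ (α - 1) ≤ x ^ e * (2 ^ |α - 1| * y ^ (α - 1)) :=
                mul_le_mul_of_nonneg_left h1 (Real.rpow_nonneg hx.1.le _)
            _ = 2 ^ |α - 1| * y ^ (α - 1) * x ^ e := by ring
      _ = ENNReal.ofReal (2 ^ |α - 1| * y ^ (α - 1)) *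
            ∫⁻ x in Ioc 0 (y / 2), ENNReal.ofReal (x ^ e) := by
          rw [← lintegral_const_mul' _ _ ENNReal.ofReal_ne_top]
          congr 1; ext x; rw [← ENNReal.ofReal_mul (by positivity)]
      _ = ENNReal.ofReal (2 ^ |α - 1| * y ^ (α - 1)) *
            ENNReal.ofReal ((y / 2) ^ (e + 1) / (e + 1)) := by
          congr 1
          rw [← ofReal_integral_eq_lintegral_ofReal
            (intervalIntegrable_rpow' he (a := 0) (b := y / 2)).1
            (by filter_upwards [ae_restrict_mem measurableSet_Ioc] with x hx using
              Real.rpow_nonneg hx.1.le _)]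
          congr 1
          rw [← integral_of_le (by linarith : (0:ℝ) ≤ y / 2),
            integral_rpow (Or.inl he), Real.zero_rpow (by linarith), sub_zero]
      _ ≤ ENNReal.ofReal (C₁ * y ^ (α + e)) := by
          rw [← ENNReal.ofReal_mul (by positivity)]
          apply ENNReal.ofReal_le_ofReal
          apply le_of_eq
          have h2 : y ^ (α + e) = y ^ (α - 1) * y ^ (e + 1) := by
            rw [← Real.rpow_add hy]; ring_nf
          rw [hC₁, h2, show y / 2 = y * (1 / 2) by ring,
            Real.mul_rpow hy.le (by norm_num)]
          generalize y ^ (α - 1) = A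
          generalize y ^ (e + 1) = B
          generalize (2:ℝ) ^ |α - 1| = D
          generalize (1/2:ℝ) ^ (e + 1) = E
          ring
  have part2 : ∫⁻ x in Ioo (y / 2) y, ENNReal.ofReal (x ^ e * (y - x) ^ (α - 1)) ≤
      ENNReal.ofReal (C₂ * y ^ (α + e)) := by
    calc ∫⁻ x in Ioo (y / 2) y, ENNReal.ofReal (x ^ e * (y - x) ^ (α - 1))
        ≤ ∫⁻ x in Ioo (y / 2) y, ENNReal.ofReal (2 ^ |e| * y ^ e * (y - x) ^ (α - 1)) := by
          refine setLIntegral_mono' measurableSet_Ioo fun x hx => ?_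
          apply ENNReal.ofReal_le_ofReal
          have h1 : x ^ e ≤ 2 ^ |e| * y ^ e :=
            rpow_le_two_rpow hy (by linarith [hx.1]) (by linarith [hx.1])
              (by linarith [hx.2])
          exact mul_le_mul_of_nonneg_right h1
            (Real.rpow_nonneg (by linarith [hx.2]) _)
      _ = ENNReal.ofReal (2 ^ |e| * y ^ e) *
            ∫⁻ x in Ioo (y / 2) y, ENNReal.ofReal ((y - x) ^ (α - 1)) := by
          rw [← lintegral_const_mul' _ _ ENNReal.ofReal_ne_top]
          congr 1; ext x; rw [← ENNReal.ofReal_mul (by positivity)]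
      _ = ENNReal.ofReal (2 ^ |e| * y ^ e) *
            ENNReal.ofReal ((y / 2) ^ α / α) := by
          congr 1
          rw [setLIntegral_congr Ioo_ae_eq_Ioc]
          have hint : IntervalIntegrable (fun x => (y - x) ^ (α - 1)) volume (y / 2) y := by
            have := (intervalIntegrable_rpow' (a := 0) (b := y / 2) (r := α - 1)
              (by linarith)).comp_sub_left y
            have h0 : y - 0 = y := by ring
            have hh : y - y / 2 = y / 2 := by ring
            rw [h0, hh] at this
            exact this.symm
          rw [← ofReal_integral_eq_lintegral_ofReal hint.1
            (by filter_upwards [ae_restrict_mem measurableSet_Ioc] with x hx using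
              Real.rpow_nonneg (by linarith [hx.2]) _)]
          congr 1
          rw [← integral_of_le hy2.le,
            integral_comp_sub_left (fun t => t ^ (α - 1)) y]
          have h0 : y - y = 0 := by ring
          have hh : y - y / 2 = y / 2 := by ring
          rw [h0, hh, integral_rpow (Or.inl (by linarith)),
            Real.zero_rpow (by linarith), sub_add_cancel, sub_zero]
      _ ≤ ENNReal.ofReal (C₂ * y ^ (α + e)) := by
          rw [← ENNReal.ofReal_mul (by positivity)]
          apply ENNReal.ofReal_le_ofReal
          apply le_of_eq
          have h2 : y ^ (α + e) = y ^ e * y ^ α := by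
            rw [← Real.rpow_add hy]; ring_nf
          rw [hC₂, h2, show y / 2 = y * (1 / 2) by ring,
            Real.mul_rpow hy.le (by norm_num)]
          generalize y ^ e = A
          generalize y ^ α = B
          generalize (2:ℝ) ^ |e| = D
          generalize (1/2:ℝ) ^ α = E
          ring
  exact add_le_add part1 part2


private lemma schur_bound {p q : ℝ} (hpq : Real.HolderConjugate p q)
    {κ : ℝ → ℝ → ℝ≥0∞} (hκ : Measurable (Function.uncurry κ))
    {w : ℝ → ℝ≥0∞} (hw : Measurable w) (hw0 : ∀ x, w x ≠ 0) (hwt : ∀ x, w x ≠ ⊤)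
    {A : ℝ≥0∞} (hA0 : A ≠ 0) (hA : A ≠ ⊤)
    (h1 : ∀ x, ∫⁻ y, κ x y * w y ^ q ≤ A * w x ^ q)
    (h2 : ∀ y, ∫⁻ x, κ x y * w x ^ p ≤ A * w y ^ p)
    {F : ℝ → ℝ≥0∞} (hF : Measurable F) :
    ∫⁻ x, (∫⁻ y, κ x y * F y) ^ p ≤ A ^ p * ∫⁻ y, F y ^ p := by
  have hp : 0 < p := hpq.pos
  have hq : 0 < q := hpq.symm.pos
  have hκx : ∀ x, Measurable (κ x) := fun x => hκ.comp measurable_prodMk_left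
  have hκy : ∀ y, Measurable fun x => κ x y := fun y =>
    hκ.comp (measurable_id.prodMk measurable_const)
  have key : ∀ x, (∫⁻ y, κ x y * F y) ^ p ≤
      (A * w x ^ q) ^ (p / q) * ∫⁻ y, κ x y * (F y ^ p * (w y)⁻¹ ^ p) := by
    intro x
    have hf : Measurable fun y => κ x y ^ (1 / p) * F y * (w y)⁻¹ := by
      have := hκx x; fun_prop
    have hg : Measurable fun y => κ x y ^ (1 / q) * w y := by
      have := hκx x; fun_prop
    have hold := ENNReal.lintegral_mul_le_Lp_mul_Lq volume hpq hf.aemeasurable hg.aemeasurable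
    have hold2 : ∫⁻ y, κ x y * F y ≤
        (∫⁻ y, (κ x y ^ (1 / p) * F y * (w y)⁻¹) ^ p) ^ (1 / p) *
          (∫⁻ y, (κ x y ^ (1 / q) * w y) ^ q) ^ (1 / q) := by
      refine le_trans (le_of_eq (lintegral_congr fun y => ?_)) hold
      show κ x y * F y = κ x y ^ (1 / p) * F y * (w y)⁻¹ * (κ x y ^ (1 / q) * w y)
      have hκκ : κ x y ^ (1 / p) * κ x y ^ (1 / q) = κ x y := by
        rw [← ENNReal.rpow_add_of_nonneg _ _ (by positivity) (by positivity)]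
        rw [show 1 / p + 1 / q = 1 by
          rw [one_div, one_div]; exact hpq.inv_add_inv_eq_one]
        exact ENNReal.rpow_one _
      calc κ x y * F y = κ x y ^ (1 / p) * κ x y ^ (1 / q) * F y * 1 := by
            rw [hκκ, mul_one]
        _ = κ x y ^ (1 / p) * κ x y ^ (1 / q) * F y * ((w y)⁻¹ * w y) := by
            rw [ENNReal.inv_mul_cancel (hw0 y) (hwt y)]
        _ = κ x y ^ (1 / p) * F y * (w y)⁻¹ * (κ x y ^ (1 / q) * w y) := by ring
    have e1 : ∫⁻ y, (κ x y ^ (1 / p) * F y * (w y)⁻¹) ^ p =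
        ∫⁻ y, κ x y * (F y ^ p * (w y)⁻¹ ^ p) := by
      refine lintegral_congr fun y => ?_
      rw [ENNReal.mul_rpow_of_nonneg _ _ hp.le, ENNReal.mul_rpow_of_nonneg _ _ hp.le,
        ← ENNReal.rpow_mul, one_div_mul_cancel hp.ne', ENNReal.rpow_one, mul_assoc]
    have e2 : ∫⁻ y, (κ x y ^ (1 / q) * w y) ^ q = ∫⁻ y, κ x y * w y ^ q := by
      refine lintegral_congr fun y => ?_
      rw [ENNReal.mul_rpow_of_nonneg _ _ hq.le, ← ENNReal.rpow_mul,
        one_div_mul_cancel hq.ne', ENNReal.rpow_one]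
    rw [e1, e2] at hold2
    calc (∫⁻ y, κ x y * F y) ^ p
        ≤ ((∫⁻ y, κ x y * (F y ^ p * (w y)⁻¹ ^ p)) ^ (1 / p) *
            (∫⁻ y, κ x y * w y ^ q) ^ (1 / q)) ^ p := ENNReal.rpow_le_rpow hold2 hp.le
      _ = (∫⁻ y, κ x y * (F y ^ p * (w y)⁻¹ ^ p)) *
            ((∫⁻ y, κ x y * w y ^ q) ^ (1 / q)) ^ p := by
          rw [ENNReal.mul_rpow_of_nonneg _ _ hp.le, ← ENNReal.rpow_mul,
            one_div_mul_cancel hp.ne', ENNReal.rpow_one]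
      _ ≤ (∫⁻ y, κ x y * (F y ^ p * (w y)⁻¹ ^ p)) * ((A * w x ^ q) ^ (1 / q)) ^ p := by
          gcongr
          exact h1 x
      _ = (A * w x ^ q) ^ (p / q) * ∫⁻ y, κ x y * (F y ^ p * (w y)⁻¹ ^ p) := by
          rw [← ENNReal.rpow_mul, show 1 / q * p = p / q by ring, mul_comm]
  have hApq : A ^ (p / q) ≠ ⊤ := ENNReal.rpow_ne_top_of_nonneg (by positivity) hA
  calc ∫⁻ x, (∫⁻ y, κ x y * F y) ^ p
      ≤ ∫⁻ x, (A * w x ^ q) ^ (p / q) * ∫⁻ y, κ x y * (F y ^ p * (w y)⁻¹ ^ p) :=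
        lintegral_mono key
    _ = A ^ (p / q) * ∫⁻ x, ∫⁻ y, w x ^ p * (κ x y * (F y ^ p * (w y)⁻¹ ^ p)) := by
        rw [← lintegral_const_mul' _ _ hApq]
        refine lintegral_congr fun x => ?_
        rw [ENNReal.mul_rpow_of_nonneg _ _ (by positivity), ← ENNReal.rpow_mul,
          show q * (p / q) = p by field_simp]
        rw [mul_assoc, ← lintegral_const_mul' _ _
          (ENNReal.rpow_ne_top_of_nonneg hp.le (hwt x))]
    _ = A ^ (p / q) * ∫⁻ y, ∫⁻ x, w x ^ p * (κ x y * (F y ^ p * (w y)⁻¹ ^ p)) := by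
        congr 1
        refine lintegral_lintegral_swap ?_
        have hm : Measurable fun z : ℝ × ℝ =>
            w z.1 ^ p * (κ z.1 z.2 * (F z.2 ^ p * (w z.2)⁻¹ ^ p)) := by
          fun_prop
        exact hm.aemeasurable
    _ = A ^ (p / q) * ∫⁻ y, F y ^ p * (w y)⁻¹ ^ p * ∫⁻ x, κ x y * w x ^ p := by
        congr 1
        refine lintegral_congr fun y => ?_
        rw [← lintegral_const_mul (F y ^ p * (w y)⁻¹ ^ p)
          (by have := hκy y; fun_prop : Measurable fun x => κ x y * w x ^ p)]
        exact lintegral_congr fun x => by ring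
    _ ≤ A ^ (p / q) * ∫⁻ y, F y ^ p * (w y)⁻¹ ^ p * (A * w y ^ p) := by
        gcongr
        exact h2 _
    _ = A ^ (p / q) * (A * ∫⁻ y, F y ^ p) := by
        congr 1
        rw [← lintegral_const_mul' A _ hA]
        refine lintegral_congr fun y => ?_
        have hww : (w y)⁻¹ ^ p * w y ^ p = 1 := by
          rw [← ENNReal.mul_rpow_of_nonneg _ _ hp.le,
            ENNReal.inv_mul_cancel (hw0 y) (hwt y), ENNReal.one_rpow]
        calc F y ^ p * (w y)⁻¹ ^ p * (A * w y ^ p)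
            = A * (F y ^ p * ((w y)⁻¹ ^ p * w y ^ p)) := by ring
          _ = A * F y ^ p := by rw [hww, mul_one]
    _ = A ^ p * ∫⁻ y, F y ^ p := by
        rw [← mul_assoc]
        congr 1
        nth_rewrite 2 [← ENNReal.rpow_one A]
        rw [← ENNReal.rpow_add _ _ hA0 hA, hpq.div_conj_eq_sub_one, sub_add_cancel]

private lemma schur_bound_one {κ : ℝ → ℝ → ℝ≥0∞} (hκ : Measurable (Function.uncurry κ))
    {A : ℝ≥0∞} (hA : A ≠ ⊤) (h2 : ∀ y, ∫⁻ x, κ x y ≤ A)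
    {F : ℝ → ℝ≥0∞} (hF : Measurable F) :
    ∫⁻ x, (∫⁻ y, κ x y * F y) ^ (1 : ℝ) ≤ A ^ (1 : ℝ) * ∫⁻ y, F y ^ (1 : ℝ) := by
  simp only [ENNReal.rpow_one]
  have hκy : ∀ y, Measurable fun x => κ x y := fun y =>
    hκ.comp (measurable_id.prodMk measurable_const)
  rw [lintegral_lintegral_swap (by fun_prop : Measurable (Function.uncurry fun x y => κ x y * F y)).aemeasurable]
  calc ∫⁻ y, ∫⁻ x, κ x y * F y
      = ∫⁻ y, F y * ∫⁻ x, κ x y := by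
        refine lintegral_congr fun y => ?_
        rw [← lintegral_const_mul (F y) (hκy y)]
        exact lintegral_congr fun x => mul_comm _ _
    _ ≤ ∫⁻ y, F y * A := lintegral_mono fun y => mul_le_mul_right (h2 y) _
    _ = A * ∫⁻ y, F y := by
        rw [lintegral_mul_const' A _ hA, mul_comm]


/-- The (nonnegative, extended-real-valued) integral kernel of the weighted
fractional-integral operator. -/
private def kern (b α β γ : ℝ) : ℝ → ℝ → ℝ≥0∞ := fun x y =>
  ({z : ℝ × ℝ | 0 < z.1 ∧ z.1 < z.2 ∧ z.2 < b}).indicator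
    (fun z => ENNReal.ofReal (z.1 ^ β * ((z.2 - z.1) ^ (α - 1) * z.2 ^ γ) *
      (Real.Gamma α)⁻¹)) (x, y)

private lemma kern_set_measurable (b : ℝ) :
    MeasurableSet {z : ℝ × ℝ | 0 < z.1 ∧ z.1 < z.2 ∧ z.2 < b} := by
  have h1 : MeasurableSet {z : ℝ × ℝ | 0 < z.1} :=
    measurableSet_lt measurable_const measurable_fst
  have h2 : MeasurableSet {z : ℝ × ℝ | z.1 < z.2} :=
    measurableSet_lt measurable_fst measurable_snd
  have h3 : MeasurableSet {z : ℝ × ℝ | z.2 < b} :=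
    measurableSet_lt measurable_snd measurable_const
  have : {z : ℝ × ℝ | 0 < z.1 ∧ z.1 < z.2 ∧ z.2 < b} =
      {z : ℝ × ℝ | 0 < z.1} ∩ ({z : ℝ × ℝ | z.1 < z.2} ∩ {z : ℝ × ℝ | z.2 < b}) := by
    ext z; simp [mem_setOf_eq, and_assoc]
  rw [this]
  exact h1.inter (h2.inter h3)

private lemma kern_measurable (b α β γ : ℝ) :
    Measurable (Function.uncurry (kern b α β γ)) := by
  have : Function.uncurry (kern b α β γ) =
      ({z : ℝ × ℝ | 0 < z.1 ∧ z.1 < z.2 ∧ z.2 < b}).indicator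
        (fun z => ENNReal.ofReal (z.1 ^ β * ((z.2 - z.1) ^ (α - 1) * z.2 ^ γ) *
          (Real.Gamma α)⁻¹)) := by
    ext z
    rfl
  rw [this]
  exact Measurable.indicator (by fun_prop) (kern_set_measurable b)

private lemma kern_zero_of_not_pos_left {b α β γ x y : ℝ} (hx : ¬ 0 < x) :
    kern b α β γ x y = 0 :=
  indicator_of_notMem (fun hmem => hx hmem.1) _

private lemma kern_zero_of_not_lt {b α β γ x y : ℝ} (hy : ¬ (0 < y ∧ y < b)) :
    kern b α β γ x y = 0 :=
  indicator_of_notMem (fun hmem => hy ⟨lt_trans hmem.1 hmem.2.1, hmem.2.2⟩) _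

/-- First Schur condition: fixed `y`, integrate over `x`. -/
private lemma kern_cond_left (b α β γ : ℝ) (hα : 0 < α)
    (hsum : α + β + γ = 0) {u : ℝ} (hu : -1 < β - u) :
    ∃ C : ℝ, 0 < C ∧ ∀ y : ℝ, 0 < y → y < b →
      ∫⁻ x, kern b α β γ x y * ENNReal.ofReal (x ^ (-u)) ≤
        ENNReal.ofReal C * ENNReal.ofReal (y ^ (-u)) := by
  obtain ⟨C₂, hC₂, hnear⟩ := aux_near hα hu
  have hΓ : 0 < (Real.Gamma α)⁻¹ := inv_pos.mpr (Real.Gamma_pos_of_pos hα)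
  refine ⟨C₂ * (Real.Gamma α)⁻¹, mul_pos hC₂ hΓ, fun y hy hyb => ?_⟩
  have hpt : ∀ x, kern b α β γ x y * ENNReal.ofReal (x ^ (-u)) =
      (Ioo 0 y).indicator (fun x => ENNReal.ofReal
        ((Real.Gamma α)⁻¹ * y ^ γ * (x ^ (β - u) * (y - x) ^ (α - 1)))) x := by
    intro x
    by_cases hx : x ∈ Ioo 0 y
    · have hx0 : 0 < x := hx.1
      have hmem : ((x, y) : ℝ × ℝ) ∈ {z : ℝ × ℝ | 0 < z.1 ∧ z.1 < z.2 ∧ z.2 < b} :=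
        ⟨hx0, hx.2, hyb⟩
      have hyx : (0:ℝ) ≤ y - x := by linarith [hx.2]
      have hnn : (0:ℝ) ≤ x ^ β * ((y - x) ^ (α - 1) * y ^ γ) * (Real.Gamma α)⁻¹ :=
        mul_nonneg (mul_nonneg (Real.rpow_nonneg hx0.le _)
          (mul_nonneg (Real.rpow_nonneg hyx _) (Real.rpow_nonneg hy.le _))) hΓ.le
      rw [indicator_of_mem hx, kern, indicator_of_mem hmem,
        ← ENNReal.ofReal_mul hnn]
      congr 1
      have hxu : x ^ β * x ^ (-u) = x ^ (β - u) := by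
        rw [sub_eq_add_neg, ← Real.rpow_add hx0]
      calc x ^ β * ((y - x) ^ (α - 1) * y ^ γ) * (Real.Gamma α)⁻¹ * x ^ (-u)
          = (Real.Gamma α)⁻¹ * y ^ γ * (x ^ β * x ^ (-u) * (y - x) ^ (α - 1)) := by ring
        _ = (Real.Gamma α)⁻¹ * y ^ γ * (x ^ (β - u) * (y - x) ^ (α - 1)) := by rw [hxu]
    · rw [indicator_of_notMem hx, kern, indicator_of_notMem, zero_mul]
      intro hmem
      exact hx ⟨hmem.1, hmem.2.1⟩
  calc ∫⁻ x, kern b α β γ x y * ENNReal.ofReal (x ^ (-u))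
      = ∫⁻ x in Ioo 0 y, ENNReal.ofReal
          ((Real.Gamma α)⁻¹ * y ^ γ * (x ^ (β - u) * (y - x) ^ (α - 1))) := by
        rw [lintegral_congr hpt, lintegral_indicator measurableSet_Ioo]
    _ = ENNReal.ofReal ((Real.Gamma α)⁻¹ * y ^ γ) *
          ∫⁻ x in Ioo 0 y, ENNReal.ofReal (x ^ (β - u) * (y - x) ^ (α - 1)) := by
        rw [← lintegral_const_mul' _ _ ENNReal.ofReal_ne_top]
        refine lintegral_congr fun x => ?_
        rw [← ENNReal.ofReal_mul (by positivity)]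
    _ ≤ ENNReal.ofReal ((Real.Gamma α)⁻¹ * y ^ γ) *
          ENNReal.ofReal (C₂ * y ^ (α + (β - u))) := mul_le_mul_right (hnear y hy) _
    _ ≤ ENNReal.ofReal (C₂ * (Real.Gamma α)⁻¹) * ENNReal.ofReal (y ^ (-u)) := by
        rw [← ENNReal.ofReal_mul (by positivity), ← ENNReal.ofReal_mul (by positivity)]
        apply ENNReal.ofReal_le_ofReal
        apply le_of_eq
        have hyy : y ^ γ * y ^ (α + (β - u)) = y ^ (-u) := by
          rw [← Real.rpow_add hy]; congr 1; linarith
        calc (Real.Gamma α)⁻¹ * y ^ γ * (C₂ * y ^ (α + (β - u)))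
            = C₂ * (Real.Gamma α)⁻¹ * (y ^ γ * y ^ (α + (β - u))) := by ring
          _ = C₂ * (Real.Gamma α)⁻¹ * y ^ (-u) := by rw [hyy]

/-- Second Schur condition: fixed `x > 0`, integrate over `y`. -/
private lemma kern_cond_right (b α β γ : ℝ) (hα : 0 < α)
    (hsum : α + β + γ = 0) {v : ℝ} (hv : α + (γ - v) < 0) :
    ∃ C : ℝ, 0 < C ∧ ∀ x : ℝ, 0 < x →
      ∫⁻ y, kern b α β γ x y * ENNReal.ofReal (y ^ (-v)) ≤
        ENNReal.ofReal C * ENNReal.ofReal (x ^ (-v)) := by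
  obtain ⟨C₁, hC₁, htail⟩ := aux_tail hα hv
  have hΓ : 0 < (Real.Gamma α)⁻¹ := inv_pos.mpr (Real.Gamma_pos_of_pos hα)
  refine ⟨C₁ * (Real.Gamma α)⁻¹, mul_pos hC₁ hΓ, fun x hx => ?_⟩
  have hpt : ∀ y, kern b α β γ x y * ENNReal.ofReal (y ^ (-v)) =
      (Ioo x b).indicator (fun y => ENNReal.ofReal
        (x ^ β * (Real.Gamma α)⁻¹ * ((y - x) ^ (α - 1) * y ^ (γ - v)))) y := by
    intro y
    by_cases hy : y ∈ Ioo x b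
    · have hy0 : 0 < y := lt_trans hx hy.1
      have hmem : ((x, y) : ℝ × ℝ) ∈ {z : ℝ × ℝ | 0 < z.1 ∧ z.1 < z.2 ∧ z.2 < b} :=
        ⟨hx, hy.1, hy.2⟩
      have hyx : (0:ℝ) ≤ y - x := by linarith [hy.1]
      have hnn : (0:ℝ) ≤ x ^ β * ((y - x) ^ (α - 1) * y ^ γ) * (Real.Gamma α)⁻¹ :=
        mul_nonneg (mul_nonneg (Real.rpow_nonneg hx.le _)
          (mul_nonneg (Real.rpow_nonneg hyx _) (Real.rpow_nonneg hy0.le _))) hΓ.le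
      rw [indicator_of_mem hy, kern, indicator_of_mem hmem,
        ← ENNReal.ofReal_mul hnn]
      congr 1
      have hyv : y ^ γ * y ^ (-v) = y ^ (γ - v) := by
        rw [sub_eq_add_neg, ← Real.rpow_add hy0]
      calc x ^ β * ((y - x) ^ (α - 1) * y ^ γ) * (Real.Gamma α)⁻¹ * y ^ (-v)
          = x ^ β * (Real.Gamma α)⁻¹ * ((y - x) ^ (α - 1) * (y ^ γ * y ^ (-v))) := by ring
        _ = x ^ β * (Real.Gamma α)⁻¹ * ((y - x) ^ (α - 1) * y ^ (γ - v)) := by rw [hyv]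
    · rw [indicator_of_notMem hy, kern, indicator_of_notMem, zero_mul]
      intro hmem
      exact hy ⟨hmem.2.1, hmem.2.2⟩
  calc ∫⁻ y, kern b α β γ x y * ENNReal.ofReal (y ^ (-v))
      = ∫⁻ y in Ioo x b, ENNReal.ofReal
          (x ^ β * (Real.Gamma α)⁻¹ * ((y - x) ^ (α - 1) * y ^ (γ - v))) := by
        rw [lintegral_congr hpt, lintegral_indicator measurableSet_Ioo]
    _ = ENNReal.ofReal (x ^ β * (Real.Gamma α)⁻¹) *
          ∫⁻ y in Ioo x b, ENNReal.ofReal ((y - x) ^ (α - 1) * y ^ (γ - v)) := by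
        rw [← lintegral_const_mul' _ _ ENNReal.ofReal_ne_top]
        refine lintegral_congr fun y => ?_
        rw [← ENNReal.ofReal_mul (by positivity)]
    _ ≤ ENNReal.ofReal (x ^ β * (Real.Gamma α)⁻¹) *
          ∫⁻ y in Ioi x, ENNReal.ofReal ((y - x) ^ (α - 1) * y ^ (γ - v)) :=
        mul_le_mul_right (lintegral_mono_set Ioo_subset_Ioi_self) _
    _ ≤ ENNReal.ofReal (x ^ β * (Real.Gamma α)⁻¹) *
          ENNReal.ofReal (C₁ * x ^ (α + (γ - v))) := mul_le_mul_right (htail x hx) _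
    _ ≤ ENNReal.ofReal (C₁ * (Real.Gamma α)⁻¹) * ENNReal.ofReal (x ^ (-v)) := by
        rw [← ENNReal.ofReal_mul (by positivity), ← ENNReal.ofReal_mul (by positivity)]
        apply ENNReal.ofReal_le_ofReal
        apply le_of_eq
        have hxx : x ^ β * x ^ (α + (γ - v)) = x ^ (-v) := by
          rw [← Real.rpow_add hx]; congr 1; linarith
        calc x ^ β * (Real.Gamma α)⁻¹ * (C₁ * x ^ (α + (γ - v)))
            = C₁ * (Real.Gamma α)⁻¹ * (x ^ β * x ^ (α + (γ - v))) := by ring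
          _ = C₁ * (Real.Gamma α)⁻¹ * x ^ (-v) := by rw [hxx]


private lemma kern_zero_of_not_pos_right {b α β γ x y : ℝ} (hy : ¬ 0 < y) :
    kern b α β γ x y = 0 :=
  indicator_of_notMem (fun hmem => hy (lt_trans hmem.1 hmem.2.1)) _


private lemma master (p b α β γ : ℝ) (hp : 1 ≤ p) (hb : 0 < b) (hα : 0 < α)
    (hsum : α + β + γ = 0) (hγp : (α + γ) * p < 1) :
    ∃ C : ℝ, 0 < C ∧ ∀ F : ℝ → ℝ≥0∞, Measurable F →
      ∫⁻ x, (∫⁻ y, kern b α β γ x y * F y) ^ p ≤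
        ENNReal.ofReal C ^ p * ∫⁻ y, F y ^ p := by
  rcases eq_or_lt_of_le hp with hp1 | hp1
  · -- p = 1
    have hβ : -1 < β - 0 := by nlinarith
    obtain ⟨C, hC, hcond⟩ := kern_cond_left b α β γ hα hsum hβ
    refine ⟨C, hC, fun F hF => ?_⟩
    have h2 : ∀ y, ∫⁻ x, kern b α β γ x y ≤ ENNReal.ofReal C := by
      intro y
      by_cases hy : 0 < y ∧ y < b
      · have h := hcond y hy.1 hy.2
        simpa [neg_zero, Real.rpow_zero, ENNReal.ofReal_one, mul_one] using h
      · have hz : ∀ x, kern b α β γ x y = 0 := fun x => kern_zero_of_not_lt hy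
        rw [lintegral_congr hz, lintegral_zero]
        exact bot_le
    have := schur_bound_one (kern_measurable b α β γ) ENNReal.ofReal_ne_top h2 hF
    rw [← hp1]
    exact this
  · -- 1 < p
    have hpq := Real.HolderConjugate.conjExponent hp1
    set q := Real.conjExponent p with hq_def
    have hppos : 0 < p := hpq.pos
    have hq : 0 < q := hpq.symm.pos
    set s := α + γ with hs_def
    have hkey : s / q < (1 - s) / p := by
      rw [div_lt_div_iff₀ hq hppos]
      nlinarith [hpq.mul_eq_add]
    set θ := (s / q + (1 - s) / p) / 2 with hθ_def
    have hθ1 : s / q < θ := by rw [hθ_def]; linarith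
    have hθ2 : θ < (1 - s) / p := by rw [hθ_def]; linarith
    have hv : α + (γ - θ * q) < 0 := by
      have h := (div_lt_iff₀ hq).mp hθ1
      have : s = α + γ := hs_def
      linarith
    have hu : -1 < β - θ * p := by
      have h := (lt_div_iff₀ hppos).mp hθ2
      have hβ : β = -s := by rw [hs_def]; linarith
      linarith
    obtain ⟨C₁, hC₁, hcond1⟩ := kern_cond_right b α β γ hα hsum hv
    obtain ⟨C₂, hC₂, hcond2⟩ := kern_cond_left b α β γ hα hsum hu
    set Cm := max C₁ C₂ with hCm_def
    have hCm : 0 < Cm := lt_of_lt_of_le hC₁ (le_max_left _ _)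
    refine ⟨Cm, hCm, fun F hF => ?_⟩
    set w : ℝ → ℝ≥0∞ := fun x => if 0 < x then ENNReal.ofReal (x ^ (-θ)) else 1 with hw_def
    have hw : Measurable w := by
      apply Measurable.ite (measurableSet_lt measurable_const measurable_id)
      · fun_prop
      · exact measurable_const
    have hw0 : ∀ x, w x ≠ 0 := by
      intro x
      rw [hw_def]
      dsimp only
      split_ifs with h
      · exact (ENNReal.ofReal_pos.mpr (Real.rpow_pos_of_pos h _)).ne'
      · exact one_ne_zero
    have hwt : ∀ x, w x ≠ ⊤ := by
      intro x
      rw [hw_def]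
      dsimp only
      split_ifs
      · exact ENNReal.ofReal_ne_top
      · exact ENNReal.one_ne_top
    have wpow : ∀ r : ℝ, 0 < r → ∀ x : ℝ, 0 < x → w x ^ r = ENNReal.ofReal (x ^ (-(θ * r))) := by
      intro r hr x hx
      rw [hw_def]
      dsimp only
      rw [if_pos hx, ENNReal.ofReal_rpow_of_pos (Real.rpow_pos_of_pos hx _)]
      congr 1
      rw [← neg_mul, Real.rpow_mul hx.le]
    have h1 : ∀ x, ∫⁻ y, kern b α β γ x y * w y ^ q ≤ ENNReal.ofReal Cm * w x ^ q := by
      intro x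
      by_cases hx : 0 < x
      · have heq : ∀ y, kern b α β γ x y * w y ^ q =
            kern b α β γ x y * ENNReal.ofReal (y ^ (-(θ * q))) := by
          intro y
          by_cases hy : 0 < y
          · rw [wpow q hq y hy]
          · rw [kern_zero_of_not_pos_right hy, zero_mul, zero_mul]
        rw [lintegral_congr heq, wpow q hq x hx]
        refine le_trans ?_ (mul_le_mul_left
          (ENNReal.ofReal_le_ofReal (le_max_left C₁ C₂)) _)
        exact hcond1 x hx
      · have hz : ∀ y, kern b α β γ x y * w y ^ q = 0 := fun y => by
          rw [kern_zero_of_not_pos_left hx, zero_mul]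
        rw [lintegral_congr hz, lintegral_zero]
        exact bot_le
    have h2 : ∀ y, ∫⁻ x, kern b α β γ x y * w x ^ p ≤ ENNReal.ofReal Cm * w y ^ p := by
      intro y
      by_cases hy : 0 < y ∧ y < b
      · have heq : ∀ x, kern b α β γ x y * w x ^ p =
            kern b α β γ x y * ENNReal.ofReal (x ^ (-(θ * p))) := by
          intro x
          by_cases hx : 0 < x
          · rw [wpow p hppos x hx]
          · rw [kern_zero_of_not_pos_left hx, zero_mul, zero_mul]
        rw [lintegral_congr heq, wpow p hppos y hy.1]
        refine le_trans ?_ (mul_le_mul_left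
          (ENNReal.ofReal_le_ofReal (le_max_right C₁ C₂)) _)
        exact hcond2 y hy.1 hy.2
      · have hz : ∀ x, kern b α β γ x y * w x ^ p = 0 := fun x => by
          rw [kern_zero_of_not_lt hy, zero_mul]
        rw [lintegral_congr hz, lintegral_zero]
        exact bot_le
    exact schur_bound hpq (kern_measurable b α β γ) hw hw0 hwt
      (ENNReal.ofReal_pos.mpr hCm).ne' ENNReal.ofReal_ne_top h1 h2 hF


/-- For `p ≥ 1`, `b > 0`, `α > 0`, `α + β + γ = 0` and `(α+γ)p < 1`, the operator
`f ↦ (x ↦ x^β (I^α_{b-}(y ↦ y^γ f(y)))(x))` is bounded on `L^p([0,b])`. -/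
theorem fracIntegral_right_weighted_bounded
    (p b α β γ : ℝ) (hp : 1 ≤ p) (hb : 0 < b) (hα : 0 < α)
    (hsum : α + β + γ = 0) (hγp : (α + γ) * p < 1) :
    ∃ C : ℝ, 0 < C ∧ ∀ f : ℝ → ℝ,
      MemLp f (ENNReal.ofReal p) (volume.restrict (Icc (0 : ℝ) b)) →
        MemLp (fun x => x ^ β * Iminus α b (fun y => y ^ γ * f y) x)
          (ENNReal.ofReal p) (volume.restrict (Icc (0 : ℝ) b)) ∧
        eLpNorm (fun x => x ^ β * Iminus α b (fun y => y ^ γ * f y) x)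
            (ENNReal.ofReal p) (volume.restrict (Icc (0 : ℝ) b)) ≤
          ENNReal.ofReal C * eLpNorm f (ENNReal.ofReal p) (volume.restrict (Icc (0 : ℝ) b)) := by
  obtain ⟨C, hC, hmaster⟩ := master p b α β γ hp hb hα hsum hγp
  refine ⟨C, hC, fun f hf => ?_⟩
  have hp0 : (0:ℝ) < p := lt_of_lt_of_le one_pos hp
  have hP0 : (ENNReal.ofReal p) ≠ 0 := (ENNReal.ofReal_pos.mpr hp0).ne'
  have hPt : (ENNReal.ofReal p) ≠ ⊤ := ENNReal.ofReal_ne_top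
  have htR : (ENNReal.ofReal p).toReal = p := ENNReal.toReal_ofReal hp0.le
  have hΓpos : 0 < Real.Gamma α := Real.Gamma_pos_of_pos hα
  -- measurable representative
  set g : ℝ → ℝ := hf.1.mk f with hg_def
  have hg_sm : StronglyMeasurable g := hf.1.stronglyMeasurable_mk
  have hg_meas : Measurable g := hg_sm.measurable
  have hfg : f =ᵐ[volume.restrict (Icc (0 : ℝ) b)] g := hf.1.ae_eq_mk
  -- the operators agree a.e.
  have Teq : (fun x => x ^ β * Iminus α b (fun y => y ^ γ * f y) x)
      =ᵐ[volume.restrict (Icc (0 : ℝ) b)]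
      (fun x => x ^ β * Iminus α b (fun y => y ^ γ * g y) x) := by
    filter_upwards [self_mem_ae_restrict measurableSet_Icc] with x hx
    have hsub : Ioo x b ⊆ Icc (0:ℝ) b := fun y hy => ⟨le_trans hx.1 hy.1.le, hy.2.le⟩
    have hfg' : f =ᵐ[volume.restrict (Ioo x b)] g :=
      ae_restrict_of_ae_restrict_of_subset hsub hfg
    have hi : ∫ y in Ioo x b, (y - x) ^ (α - 1) * (y ^ γ * f y) =
        ∫ y in Ioo x b, (y - x) ^ (α - 1) * (y ^ γ * g y) :=
      integral_congr_ae (hfg'.mono fun y hy => by simp only [hy])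
    rw [Iminus, Iminus, hi]
  -- measurability of the operator applied to g
  have hS₂m : MeasurableSet {z : ℝ × ℝ | z.1 < z.2 ∧ z.2 < b} := by
    have : {z : ℝ × ℝ | z.1 < z.2 ∧ z.2 < b} =
        {z : ℝ × ℝ | z.1 < z.2} ∩ {z : ℝ × ℝ | z.2 < b} := by
      ext z; simp [mem_setOf_eq]
    rw [this]
    exact (measurableSet_lt measurable_fst measurable_snd).inter
      (measurableSet_lt measurable_snd measurable_const)
  set H : ℝ × ℝ → ℝ := fun z => ({z : ℝ × ℝ | z.1 < z.2 ∧ z.2 < b}).indicator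
    (fun w => (w.2 - w.1) ^ (α - 1) * (w.2 ^ γ * g w.2)) z with hH_def
  have hH : StronglyMeasurable H :=
    ((by fun_prop : Measurable fun w : ℝ × ℝ =>
      (w.2 - w.1) ^ (α - 1) * (w.2 ^ γ * g w.2)).indicator hS₂m).stronglyMeasurable
  have hHint : ∀ x : ℝ, ∫ y in Ioo x b, (y - x) ^ (α - 1) * (y ^ γ * g y) =
      ∫ y, H (x, y) := by
    intro x
    rw [← MeasureTheory.integral_indicator measurableSet_Ioo]
    have hpt : ∀ y, (Ioo x b).indicator
        (fun y => (y - x) ^ (α - 1) * (y ^ γ * g y)) y = H (x, y) := by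
      intro y
      simp only [hH_def]
      by_cases hy : x < y ∧ y < b
      · rw [indicator_of_mem (mem_Ioo.mpr hy), indicator_of_mem (by exact hy)]
      · rw [indicator_of_notMem (fun h => hy (mem_Ioo.mp h)),
          indicator_of_notMem (by exact hy)]
    exact integral_congr_ae (Filter.EventuallyEq.of_eq (funext hpt))
  have hTg_meas : Measurable fun x => x ^ β * Iminus α b (fun y => y ^ γ * g y) x := by
    have h1 : StronglyMeasurable fun x : ℝ => ∫ y, H (x, y) := hH.integral_prod_right'
    have h2 : (fun x => x ^ β * Iminus α b (fun y => y ^ γ * g y) x) =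
        fun x => x ^ β * ((1 / Real.Gamma α) * ∫ y, H (x, y)) := by
      funext x; rw [Iminus, hHint x]
    rw [h2]
    have h3 := h1.measurable
    fun_prop
  -- the ENNReal-valued data
  set F : ℝ → ℝ≥0∞ := (Ioo (0:ℝ) b).indicator (fun y => (‖g y‖₊ : ℝ≥0∞)) with hF_def
  have hF : Measurable F := hg_meas.enorm.indicator measurableSet_Ioo
  -- pointwise bound
  have hbound : ∀ x ∈ Ioo (0:ℝ) b,
      (‖x ^ β * Iminus α b (fun y => y ^ γ * g y) x‖₊ : ℝ≥0∞) ≤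
        ∫⁻ y, kern b α β γ x y * F y := by
    intro x hx
    rw [Iminus]
    calc (‖x ^ β * ((1 / Real.Gamma α) *
            ∫ y in Ioo x b, (y - x) ^ (α - 1) * (y ^ γ * g y))‖₊ : ℝ≥0∞)
        = ENNReal.ofReal (x ^ β) * (ENNReal.ofReal (1 / Real.Gamma α) *
            (‖∫ y in Ioo x b, (y - x) ^ (α - 1) * (y ^ γ * g y)‖₊ : ℝ≥0∞)) := by
          rw [nnnorm_mul, nnnorm_mul, ENNReal.coe_mul, ENNReal.coe_mul,
            ← enorm_eq_nnnorm (x ^ β), ← enorm_eq_nnnorm (1 / Real.Gamma α),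
            Real.enorm_eq_ofReal (Real.rpow_nonneg hx.1.le _),
            Real.enorm_eq_ofReal (by positivity)]
      _ ≤ ENNReal.ofReal (x ^ β) * (ENNReal.ofReal (1 / Real.Gamma α) *
            ∫⁻ y in Ioo x b, (‖(y - x) ^ (α - 1) * (y ^ γ * g y)‖₊ : ℝ≥0∞)) := by
          gcongr
          exact enorm_integral_le_lintegral_enorm _
      _ = ∫⁻ y in Ioo x b, ENNReal.ofReal
            (x ^ β * ((y - x) ^ (α - 1) * y ^ γ) * (Real.Gamma α)⁻¹) *
            (‖g y‖₊ : ℝ≥0∞) := by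
          rw [← lintegral_const_mul' _ _ ENNReal.ofReal_ne_top,
            ← lintegral_const_mul' _ _ ENNReal.ofReal_ne_top]
          refine setLIntegral_congr_fun measurableSet_Ioo (fun y hy => ?_)
          have hyx : (0:ℝ) ≤ y - x := by linarith [hy.1]
          have hy0 : (0:ℝ) < y := lt_trans hx.1 hy.1
          have hk : (0:ℝ) ≤ (y - x) ^ (α - 1) * y ^ γ :=
            mul_nonneg (Real.rpow_nonneg hyx _) (Real.rpow_nonneg hy0.le _)
          rw [show (y - x) ^ (α - 1) * (y ^ γ * g y) =
            ((y - x) ^ (α - 1) * y ^ γ) * g y from by ring]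
          rw [nnnorm_mul, ENNReal.coe_mul, ← enorm_eq_nnnorm ((y - x) ^ (α - 1) * y ^ γ),
              Real.enorm_eq_ofReal hk]
          rw [show ENNReal.ofReal (x ^ β) * (ENNReal.ofReal (1 / Real.Gamma α) *
              (ENNReal.ofReal ((y - x) ^ (α - 1) * y ^ γ) * (‖g y‖₊ : ℝ≥0∞))) =
            (ENNReal.ofReal (x ^ β) * ENNReal.ofReal (1 / Real.Gamma α) *
              ENNReal.ofReal ((y - x) ^ (α - 1) * y ^ γ)) * (‖g y‖₊ : ℝ≥0∞) from by ring]
          congr 1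
          rw [← ENNReal.ofReal_mul (Real.rpow_nonneg hx.1.le _),
            ← ENNReal.ofReal_mul (mul_nonneg (Real.rpow_nonneg hx.1.le _)
              (by positivity))]
          congr 1
          rw [one_div]
          ring
      _ = ∫⁻ y, kern b α β γ x y * F y := by
          rw [← lintegral_indicator measurableSet_Ioo]
          refine lintegral_congr fun y => ?_
          by_cases hy : y ∈ Ioo x b
          · have hy0b : y ∈ Ioo (0:ℝ) b := ⟨lt_trans hx.1 hy.1, hy.2⟩
            rw [indicator_of_mem hy, kern,
              indicator_of_mem (show ((x,y) : ℝ × ℝ) ∈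
                {z : ℝ × ℝ | 0 < z.1 ∧ z.1 < z.2 ∧ z.2 < b} from ⟨hx.1, hy.1, hy.2⟩),
              hF_def, indicator_of_mem hy0b]
          · rw [indicator_of_notMem hy, kern,
              indicator_of_notMem (fun hmem => hy ⟨hmem.2.1, hmem.2.2⟩), zero_mul]
  -- norms
  have hNf : eLpNorm f (ENNReal.ofReal p) (volume.restrict (Icc (0:ℝ) b)) =
      eLpNorm g (ENNReal.ofReal p) (volume.restrict (Icc (0:ℝ) b)) := eLpNorm_congr_ae hfg
  have hgp : (eLpNorm g (ENNReal.ofReal p) (volume.restrict (Icc (0:ℝ) b))) ^ p =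
      ∫⁻ x in Icc (0:ℝ) b, (‖g x‖₊ : ℝ≥0∞) ^ p := by
    rw [eLpNorm_eq_lintegral_rpow_enorm_toReal hP0 hPt, htR, ← ENNReal.rpow_mul,
      one_div_mul_cancel hp0.ne', ENNReal.rpow_one]
    rfl
  have hFp : ∫⁻ y, F y ^ p ≤
      (eLpNorm g (ENNReal.ofReal p) (volume.restrict (Icc (0:ℝ) b))) ^ p := by
    rw [hgp]
    have hpt : ∀ y, F y ^ p =
        (Ioo (0:ℝ) b).indicator (fun y => (‖g y‖₊ : ℝ≥0∞) ^ p) y := by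
      intro y
      by_cases hy : y ∈ Ioo (0:ℝ) b
      · rw [hF_def, indicator_of_mem hy, indicator_of_mem hy]
      · rw [hF_def, indicator_of_notMem hy, indicator_of_notMem hy,
          ENNReal.zero_rpow_of_pos hp0]
    rw [lintegral_congr hpt, lintegral_indicator measurableSet_Ioo]
    exact lintegral_mono_set Ioo_subset_Icc_self
  have hmain : eLpNorm (fun x => x ^ β * Iminus α b (fun y => y ^ γ * g y) x)
      (ENNReal.ofReal p) (volume.restrict (Icc (0:ℝ) b)) ≤
      ENNReal.ofReal C * eLpNorm f (ENNReal.ofReal p) (volume.restrict (Icc (0:ℝ) b)) := by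
    rw [eLpNorm_eq_lintegral_rpow_enorm_toReal hP0 hPt, htR]
    have step1 : ∫⁻ x in Icc (0:ℝ) b,
        (‖x ^ β * Iminus α b (fun y => y ^ γ * g y) x‖₊ : ℝ≥0∞) ^ p ≤
        ENNReal.ofReal C ^ p *
          (eLpNorm g (ENNReal.ofReal p) (volume.restrict (Icc (0:ℝ) b))) ^ p := by
      calc ∫⁻ x in Icc (0:ℝ) b,
            (‖x ^ β * Iminus α b (fun y => y ^ γ * g y) x‖₊ : ℝ≥0∞) ^ p
          = ∫⁻ x in Ioo (0:ℝ) b,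
            (‖x ^ β * Iminus α b (fun y => y ^ γ * g y) x‖₊ : ℝ≥0∞) ^ p :=
            (setLIntegral_congr Ioo_ae_eq_Icc).symm
        _ ≤ ∫⁻ x in Ioo (0:ℝ) b, (∫⁻ y, kern b α β γ x y * F y) ^ p :=
            setLIntegral_mono' measurableSet_Ioo fun x hx =>
              ENNReal.rpow_le_rpow (hbound x hx) hp0.le
        _ ≤ ∫⁻ x, (∫⁻ y, kern b α β γ x y * F y) ^ p := setLIntegral_le_lintegral _ _
        _ ≤ ENNReal.ofReal C ^ p * ∫⁻ y, F y ^ p := hmaster F hF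
        _ ≤ _ := mul_le_mul_right hFp _
    calc (∫⁻ x in Icc (0:ℝ) b,
          (‖x ^ β * Iminus α b (fun y => y ^ γ * g y) x‖₊ : ℝ≥0∞) ^ p) ^ (1/p)
        ≤ (ENNReal.ofReal C ^ p *
            (eLpNorm g (ENNReal.ofReal p) (volume.restrict (Icc (0:ℝ) b))) ^ p) ^ (1/p) :=
          ENNReal.rpow_le_rpow step1 (by positivity)
      _ = ENNReal.ofReal C * eLpNorm g (ENNReal.ofReal p) (volume.restrict (Icc (0:ℝ) b)) := by
          rw [← ENNReal.mul_rpow_of_nonneg _ _ hp0.le, ← ENNReal.rpow_mul,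
            mul_one_div_cancel hp0.ne', ENNReal.rpow_one]
      _ = ENNReal.ofReal C * eLpNorm f (ENNReal.ofReal p) (volume.restrict (Icc (0:ℝ) b)) := by
          rw [hNf]
  have hTeq_norm : eLpNorm (fun x => x ^ β * Iminus α b (fun y => y ^ γ * f y) x)
      (ENNReal.ofReal p) (volume.restrict (Icc (0:ℝ) b)) =
      eLpNorm (fun x => x ^ β * Iminus α b (fun y => y ^ γ * g y) x)
      (ENNReal.ofReal p) (volume.restrict (Icc (0:ℝ) b)) := eLpNorm_congr_ae Teq
  constructor
  · refine ⟨hTg_meas.aestronglyMeasurable.congr Teq.symm, ?_⟩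
    rw [hTeq_norm]
    exact lt_of_le_of_lt hmain (ENNReal.mul_lt_top ENNReal.ofReal_lt_top hf.2)
  · rw [hTeq_norm]
    exact hmain


end
end
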